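/- arXiv:2411.12912 — 4 statements merged into one kernel-verified Lean document; each statement's English description precedes it below -/
import Mathlib

section
/- Let (A, A⁺, A⁻) be a Reedy algebra and e = ε₀ + ⋯ + εₗ. Then (A/AeA, A⁺/A⁺eA⁺, A⁻/A⁻eA⁻) is a Reedy algebra, where the canonical maps A⁺/A⁺eA⁺ → A/AeA and A⁻/A⁻eA⁻ → A/AeA are injective and the degree function is inherited from A. -/
open scoped TensorProduct DirectSum

/-- The corner subspace `f·S·e` of an algebra `A`, for `S ⊆ A`. -/
def cornerSpace (k : Type*) [Field k] {A : Type*} [Ring A] [Algebra k A]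
    (f e : A) (S : Set A) : Submodule k A :=
  Submodule.span k {x | ∃ a ∈ S, x = f * a * e}

/-- Multiplication, as a linear map on the tensor product of two subspaces of an algebra. -/
noncomputable def mulTensor (k : Type*) [Field k] {A : Type*} [Ring A] [Algebra k A]
    (M N : Submodule k A) : (M ⊗[k] N) →ₗ[k] A :=
  TensorProduct.lift ((LinearMap.mul k A).domRestrict₁₂ M N)

/-- The multiplication map `⊕_l (e_j·P·e_l) ⊗ (e_l·M·e_i) → A`. -/
noncomputable def reedyMulMap (k : Type*) [Field k] {A : Type*} [Ring A] [Algebra k A]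
    {ι : Type*} [Fintype ι] [DecidableEq ι]
    (e : ι → A) (P M : Set A) (j i : ι) :
    (⨁ l : ι, (↥(cornerSpace k (e j) (e l) P) ⊗[k] ↥(cornerSpace k (e l) (e i) M))) →ₗ[k] A :=
  DirectSum.toModule k ι A fun l =>
    mulTensor k (cornerSpace k (e j) (e l) P) (cornerSpace k (e l) (e i) M)

/-- A Reedy algebra structure on `A`: a complete set of pairwise orthogonal idempotents
`e`, a degree function `deg`, and unital subalgebras `Ap = A⁺`, `Am = A⁻` containing the
idempotents, such that the corners of `A⁺` are upward directed and one-dimensional on the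
diagonal, the corners of `A⁻` are downward directed and one-dimensional on the diagonal, and
multiplication induces isomorphisms `⊕_l e_j A⁺ e_l ⊗ e_l A⁻ e_i ≅ e_j A e_i`. -/
structure IsReedy (k : Type*) [Field k] {A : Type*} [Ring A] [Algebra k A]
    {ι : Type*} [Fintype ι] [DecidableEq ι]
    (e : ι → A) (deg : ι → ℕ) (Ap Am : Subalgebra k A) : Prop where
  idem : ∀ i, IsIdempotentElem (e i)
  orth : ∀ i j, i ≠ j → e i * e j = 0
  complete : ∑ i, e i = 1
  memP : ∀ i, e i ∈ Ap
  memM : ∀ i, e i ∈ Am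
  diagP : ∀ i, Module.finrank k (cornerSpace k (e i) (e i) (Ap : Set A)) = 1
  offP : ∀ i j, i ≠ j → cornerSpace k (e j) (e i) (Ap : Set A) ≠ ⊥ → deg i < deg j
  diagM : ∀ i, Module.finrank k (cornerSpace k (e i) (e i) (Am : Set A)) = 1
  offM : ∀ i j, i ≠ j → cornerSpace k (e j) (e i) (Am : Set A) ≠ ⊥ → deg j < deg i
  mul_inj : ∀ i j, Function.Injective (reedyMulMap k e (Ap : Set A) (Am : Set A) j i)
  mul_range : ∀ i j, LinearMap.range (reedyMulMap k e (Ap : Set A) (Am : Set A) j i)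
      = cornerSpace k (e j) (e i) Set.univ
/-- The corner `eAe` of an algebra, as a non-unital subalgebra: the set of elements
fixed under left and right multiplication by `e`. -/
def cornerNonUnitalSubalgebra (k : Type*) [Field k] {A : Type*} [Ring A] [Algebra k A]
    (e : A) : NonUnitalSubalgebra k A where
  carrier := {x | e * x = x ∧ x * e = x}
  add_mem' := fun ha hb => ⟨by rw [mul_add, ha.1, hb.1], by rw [add_mul, ha.2, hb.2]⟩
  zero_mem' := ⟨mul_zero e, zero_mul e⟩
  mul_mem' := fun ha hb => ⟨by rw [← mul_assoc, ha.1], by rw [mul_assoc, hb.2]⟩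
  smul_mem' := fun c x hx => ⟨by rw [mul_smul_comm, hx.1], by rw [smul_mul_assoc, hx.2]⟩

/-- The corner ring `eAe` attached to an idempotent `e` of an algebra `A`. -/
def CornerRing (k : Type*) [Field k] {A : Type*} [Ring A] [Algebra k A]
    (e : {x : A // IsIdempotentElem x}) : Type _ :=
  ↥(cornerNonUnitalSubalgebra k (e : A))

instance CornerRing.instRing (k : Type*) [Field k] {A : Type*} [Ring A] [Algebra k A]
    (e : {x : A // IsIdempotentElem x}) : Ring (CornerRing k e) :=
  { (inferInstance : NonUnitalRing (cornerNonUnitalSubalgebra k (e : A))) with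
    one := ⟨(e : A), e.2, e.2⟩
    one_mul := fun x => Subtype.ext x.2.1
    mul_one := fun x => Subtype.ext x.2.2 }

instance CornerRing.instModule (k : Type*) [Field k] {A : Type*} [Ring A] [Algebra k A]
    (e : {x : A // IsIdempotentElem x}) : Module k (CornerRing k e) :=
  inferInstanceAs (Module k ↥(cornerNonUnitalSubalgebra k (e : A)))

noncomputable instance CornerRing.instAlgebra (k : Type*) [Field k] {A : Type*} [Ring A]
    [Algebra k A] (e : {x : A // IsIdempotentElem x}) : Algebra k (CornerRing k e) :=
  Algebra.ofModule
    (fun c x y => Subtype.ext (smul_mul_assoc c x.1 y.1))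
    (fun c x y => Subtype.ext (mul_smul_comm c x.1 y.1))

/-- The element of the corner ring `eAe` underlying `x : A`, given proofs. -/
def CornerRing.mk (k : Type*) [Field k] {A : Type*} [Ring A] [Algebra k A]
    (e : {x : A // IsIdempotentElem x}) (x : A) (h1 : (e : A) * x = x) (h2 : x * (e : A) = x) :
    CornerRing k e := ⟨x, h1, h2⟩

/-- The relation on an algebra whose ring quotient is the quotient by the two-sided ideal
generated by `ε`. -/
def idealRel {A : Type*} [Ring A] (ε : A) : A → A → Prop :=
  fun a b => b = 0 ∧ ∃ x y : A, a = x * ε * y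

/-!
Write `P_{jm} = e_j A⁺ e_m` and `N_{mi} = e_m A⁻ e_i`. The Reedy condition makes `e_j A e_i` the
direct sum of the blocks `P_{jm} N_{mi}`, and since `A⁺` only raises and `A⁻` only lowers degrees,
a product `e_j A e_m · e_m A e_i` with `deg m ≤ l` lies in the sum of the blocks through
idempotents of degree `≤ l`. Hence `e_j (AεA) e_i` is the sum of these low blocks, so it meets the
sum of the high blocks trivially. The quotient map is therefore injective on the high blocks and
on `e_j A^± e_i` when the relevant idempotent has degree `> l`: this gives injectivity of
`A^±/A^±εA^± → A/AεA` (through the Peirce decomposition `a = ∑ e_j a e_i`) and carries the Reedy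
decomposition of the high corners over to the quotient.
-/

namespace DirectSum

variable {R ι N : Type*} [Ring R] {M : ι → Type*}
  [∀ i, AddCommMonoid (M i)] [∀ i, Module R (M i)] [AddCommGroup N] [Module R N]

theorem surjective_lmap_rangeRestrict (f : ∀ i, M i →ₗ[R] N) :
    Function.Surjective (lmap fun i => (f i).rangeRestrict) :=
  (lmap_surjective _).2 fun _ => LinearMap.surjective_rangeRestrict _

variable [DecidableEq ι]

theorem toModule_eq_lsum_comp_lmap (f : ∀ i, M i →ₗ[R] N) :
    toModule R ι N f =
      DFinsupp.lsum ℕ (fun i => (LinearMap.range (f i)).subtype) ∘ₗ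
        lmap fun i => (f i).rangeRestrict :=
  linearMap_ext R fun i => LinearMap.ext fun x => by
    rw [LinearMap.comp_apply, LinearMap.comp_apply, toModule_lof, LinearMap.comp_apply, lmap_lof]
    exact (DFinsupp.lsum_single ℕ (R := R) (fun i => (LinearMap.range (f i)).subtype) i
      ((f i).rangeRestrict x)).symm

theorem range_toModule (f : ∀ i, M i →ₗ[R] N) :
    LinearMap.range (toModule R ι N f) = ⨆ i, LinearMap.range (f i) := by
  rw [toModule_eq_lsum_comp_lmap, LinearMap.range_comp_of_range_eq_top _
    (LinearMap.range_eq_top.2 (surjective_lmap_rangeRestrict f)),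
    Submodule.iSup_eq_range_dfinsupp_lsum]

theorem injective_toModule_iff (f : ∀ i, M i →ₗ[R] N) :
    Function.Injective (toModule R ι N f) ↔
      (∀ i, Function.Injective (f i)) ∧ iSupIndep fun i => LinearMap.range (f i) := by
  refine ⟨fun hf => ⟨fun i => ?_, ?_⟩, fun ⟨hf, hind⟩ => ?_⟩
  · have := hf.comp (of_injective (β := M) i)
    rwa [show ⇑(toModule R ι N f) ∘ of M i = f i from funext (toModule_lof R i)] at this
  · rw [toModule_eq_lsum_comp_lmap, LinearMap.coe_comp] at hf
    exact iSupIndep_of_dfinsupp_lsum_injective _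
      (hf.of_comp_right (surjective_lmap_rangeRestrict f))
  · rw [toModule_eq_lsum_comp_lmap, LinearMap.coe_comp]
    exact hind.dfinsupp_lsum_injective.comp
      ((lmap_injective _).2 fun i => (LinearMap.injective_rangeRestrict_iff _).2 (hf i))

end DirectSum

theorem Submodule.finrank_map_of_disjoint_ker {K V W : Type*} [Field K] [AddCommGroup V]
    [Module K V] [AddCommGroup W] [Module K W] (f : V →ₗ[K] W) {p : Submodule K V}
    (hp : Disjoint p (LinearMap.ker f)) :
    Module.finrank K (p.map f) = Module.finrank K p := by
  rw [← LinearMap.range_domRestrict]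
  exact LinearMap.finrank_range_of_inj
    (Set.injOn_iff_injective.1 (LinearMap.disjoint_ker_iff_injOn.1 hp))

theorem LinearMap.injective_comp_of_disjoint {R M N P : Type*} [Ring R] [AddCommMonoid M]
    [Module R M] [AddCommGroup N] [Module R N] [AddCommGroup P] [Module R P]
    {f : M →ₗ[R] N} {g : N →ₗ[R] P} (hf : Function.Injective f)
    (hd : Disjoint (LinearMap.range f) (LinearMap.ker g)) : Function.Injective (g ∘ₗ f) :=
  fun x y hxy => hf <| sub_eq_zero.1 <| Submodule.disjoint_def.1 hd _
    (sub_mem ⟨x, rfl⟩ ⟨y, rfl⟩) (by simpa [sub_eq_zero] using hxy)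

section Corner

variable {k A B : Type*} [Field k] [Ring A] [Algebra k A] [Ring B] [Algebra k B]

theorem cornerSpace_eq_map (f g : A) (S : Set A) :
    cornerSpace k f g S = (Submodule.span k S).map (LinearMap.mulLeftRight k (f, g)) := by
  rw [Submodule.map_span, cornerSpace]
  congr 1
  ext x
  simp [eq_comm]

theorem mem_cornerSpace {f g x : A} {S : Set A} :
    x ∈ cornerSpace k f g S ↔ ∃ a ∈ Submodule.span k S, f * a * g = x := by
  simp [cornerSpace_eq_map]

theorem mem_cornerSpace_subalgebra {f g x : A} {C : Subalgebra k A} :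
    x ∈ cornerSpace k f g (C : Set A) ↔ ∃ a ∈ C, f * a * g = x := by
  rw [mem_cornerSpace, ← Subalgebra.coe_toSubmodule, Submodule.span_eq]
  rfl

theorem mem_cornerSpace_univ {f g x : A} :
    x ∈ cornerSpace k f g Set.univ ↔ ∃ a, f * a * g = x := by
  simp [mem_cornerSpace]

theorem IsIdempotentElem.mul_eq_self_of_mem_cornerSpace_left {f g x : A} {S : Set A}
    (hf : IsIdempotentElem f) (hx : x ∈ cornerSpace k f g S) : f * x = x := by
  obtain ⟨a, -, rfl⟩ := mem_cornerSpace.1 hx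
  rw [← mul_assoc, ← mul_assoc, hf.eq]

theorem IsIdempotentElem.mul_eq_self_of_mem_cornerSpace_right {f g x : A} {S : Set A}
    (hg : IsIdempotentElem g) (hx : x ∈ cornerSpace k f g S) : x * g = x := by
  obtain ⟨a, -, rfl⟩ := mem_cornerSpace.1 hx
  rw [mul_assoc, hg.eq]

theorem cornerSpace_mul_cornerSpace_le_univ {f g u : A} (hu : IsIdempotentElem u)
    (S T : Set A) :
    cornerSpace k f u S * cornerSpace k u g T ≤ cornerSpace k f g Set.univ := by
  refine Submodule.mul_le.2 fun x hx y hy => ?_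
  obtain ⟨a, -, rfl⟩ := mem_cornerSpace.1 hx
  obtain ⟨b, -, rfl⟩ := mem_cornerSpace.1 hy
  exact mem_cornerSpace_univ.2 ⟨a * u * b, by simp only [mul_assoc, hu.mul_self_mul]⟩

theorem cornerSpace_mul_cornerSpace_le {f g u : A} {C : Subalgebra k A}
    (hu : IsIdempotentElem u) (huC : u ∈ C) :
    cornerSpace k f u (C : Set A) * cornerSpace k u g (C : Set A)
      ≤ cornerSpace k f g (C : Set A) := by
  refine Submodule.mul_le.2 fun x hx y hy => ?_
  obtain ⟨a, ha, rfl⟩ := mem_cornerSpace_subalgebra.1 hx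
  obtain ⟨b, hb, rfl⟩ := mem_cornerSpace_subalgebra.1 hy
  exact mem_cornerSpace_subalgebra.2
    ⟨a * u * b, mul_mem (mul_mem ha huC) hb, by simp only [mul_assoc, hu.mul_self_mul]⟩

theorem map_cornerSpace (π : A →ₐ[k] B) (f g : A) (S : Set A) :
    (cornerSpace k f g S).map π.toLinearMap = cornerSpace k (π f) (π g) (π '' S) := by
  rw [cornerSpace_eq_map, cornerSpace_eq_map, ← AlgHom.coe_toLinearMap, Submodule.span_image,
    ← Submodule.map_comp, ← Submodule.map_comp]
  congr 1
  ext x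
  simp

theorem range_mulTensor (M N : Submodule k A) : LinearMap.range (mulTensor k M N) = M * N :=
  Submodule.mulMap_range M N

def cornerSpaceMap (π : A →ₐ[k] B) (f g : A) (S : Set A) :
    cornerSpace k f g S →ₗ[k] cornerSpace k (π f) (π g) (π '' S) :=
  π.toLinearMap.restrict fun _ hx => map_cornerSpace π f g S ▸ Submodule.mem_map_of_mem hx

theorem surjective_cornerSpaceMap (π : A →ₐ[k] B) (f g : A) (S : Set A) :
    Function.Surjective (cornerSpaceMap π f g S) := by
  rintro ⟨y, hy⟩
  rw [← map_cornerSpace] at hy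
  obtain ⟨x, hx, rfl⟩ := hy
  exact ⟨⟨x, hx⟩, rfl⟩

end Corner

section Block

variable {k A B : Type*} [Field k] [Ring A] [Algebra k A] [Ring B] [Algebra k B]
  {ι : Type*}

/-- `e_j P e_m · e_m M e_i`; for `P = A⁺`, `M = A⁻` it is the `m`-th summand of `e_j A e_i`. -/
def reedyBlock (k : Type*) [Field k] {A : Type*} [Ring A] [Algebra k A] {ι : Type*}
    (e : ι → A) (P M : Set A) (j m i : ι) : Submodule k A :=
  cornerSpace k (e j) (e m) P * cornerSpace k (e m) (e i) M

theorem surjective_lmap_cornerSpaceMap (π : A →ₐ[k] B) (e : ι → A) (P M : Set A) (j i : ι) :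
    Function.Surjective (DirectSum.lmap (fun m =>
      TensorProduct.map (cornerSpaceMap π (e j) (e m) P) (cornerSpaceMap π (e m) (e i) M))) :=
  (DirectSum.lmap_surjective _).2 fun _ =>
    TensorProduct.map_surjective (surjective_cornerSpaceMap π _ _ _)
      (surjective_cornerSpaceMap π _ _ _)

variable [Fintype ι] [DecidableEq ι]

theorem range_reedyMulMap (e : ι → A) (P M : Set A) (j i : ι) :
    LinearMap.range (reedyMulMap k e P M j i) = ⨆ m, reedyBlock k e P M j m i := by
  simp only [reedyMulMap, DirectSum.range_toModule, range_mulTensor, reedyBlock]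

theorem injective_reedyMulMap_iff (e : ι → A) (P M : Set A) (j i : ι) :
    Function.Injective (reedyMulMap k e P M j i) ↔
      (∀ m, Function.Injective
        (mulTensor k (cornerSpace k (e j) (e m) P) (cornerSpace k (e m) (e i) M))) ∧
      iSupIndep fun m => reedyBlock k e P M j m i := by
  simp only [reedyMulMap, DirectSum.injective_toModule_iff, range_mulTensor, reedyBlock]

theorem reedyMulMap_comp_lmap (π : A →ₐ[k] B) (e : ι → A) (P M : Set A) (j i : ι) :
    reedyMulMap k (π ∘ e) (π '' P) (π '' M) j i ∘ₗ DirectSum.lmap (fun m =>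
        TensorProduct.map (cornerSpaceMap π (e j) (e m) P) (cornerSpaceMap π (e m) (e i) M)) =
      π.toLinearMap ∘ₗ reedyMulMap k e P M j i := by
  refine DirectSum.linearMap_ext k fun m => TensorProduct.ext' fun x y => ?_
  simp only [LinearMap.comp_apply, DirectSum.lmap_lof, TensorProduct.map_tmul, reedyMulMap,
    DirectSum.toModule_lof, mulTensor, TensorProduct.lift.tmul]
  exact (map_mul π (x : A) (y : A)).symm

theorem injective_reedyMulMap_map (π : A →ₐ[k] B) {e : ι → A} {P M : Set A} {j i : ι}
    (h : Function.Injective (π.toLinearMap ∘ₗ reedyMulMap k e P M j i)) :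
    Function.Injective (reedyMulMap k (π ∘ e) (π '' P) (π '' M) j i) := by
  rw [← reedyMulMap_comp_lmap, LinearMap.coe_comp] at h
  exact h.of_comp_right (surjective_lmap_cornerSpaceMap π e P M j i)

theorem range_reedyMulMap_map (π : A →ₐ[k] B) (e : ι → A) (P M : Set A) (j i : ι) :
    LinearMap.range (reedyMulMap k (π ∘ e) (π '' P) (π '' M) j i) =
      (LinearMap.range (reedyMulMap k e P M j i)).map π.toLinearMap := by
  rw [← LinearMap.range_comp, ← reedyMulMap_comp_lmap, LinearMap.range_comp_of_range_eq_top _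
    (LinearMap.range_eq_top.2 (surjective_lmap_cornerSpaceMap π e P M j i))]

end Block

section IdealSpan

variable {k A : Type*} [Field k] [Ring A] [Algebra k A]

/-- The two-sided ideal `AεA`, as a `k`-subspace. -/
def idealSpan (k : Type*) [Field k] {A : Type*} [Ring A] [Algebra k A] (ε : A) :
    Submodule k A :=
  Submodule.span k {x | ∃ u v : A, u * ε * v = x}

theorem self_mem_idealSpan (ε : A) : ε ∈ idealSpan k ε :=
  Submodule.subset_span ⟨1, 1, by simp⟩

theorem mul_mul_mem_idealSpan {ε x : A} (u v : A) (hx : x ∈ idealSpan k ε) :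
    u * x * v ∈ idealSpan k ε := by
  induction hx using Submodule.span_induction with
  | mem y hy =>
    obtain ⟨a, b, rfl⟩ := hy
    exact Submodule.subset_span ⟨u * a, b * v, by noncomm_ring⟩
  | zero => simp
  | add a b _ _ ha hb => simpa [mul_add, add_mul] using add_mem ha hb
  | smul c a _ ha => simpa [mul_smul_comm, smul_mul_assoc] using Submodule.smul_mem _ c ha

def idealSpanCon (k : Type*) [Field k] {A : Type*} [Ring A] [Algebra k A] (ε : A) :
    RingCon A where
  r a b := a - b ∈ idealSpan k ε
  iseqv := ⟨fun a => by simp, fun h => by simpa using neg_mem h,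
    fun h₁ h₂ => by simpa using add_mem h₁ h₂⟩
  add' h₁ h₂ := by simpa [add_sub_add_comm] using add_mem h₁ h₂
  mul' {a b c d} h₁ h₂ := by
    rw [show a * c - b * d = a * (c - d) * 1 + 1 * (a - b) * d by noncomm_ring]
    exact add_mem (mul_mul_mem_idealSpan a 1 h₂) (mul_mul_mem_idealSpan 1 d h₁)

theorem mkAlgHom_idealRel_eq_zero_iff (ε a : A) :
    RingQuot.mkAlgHom k (idealRel ε) a = 0 ↔ a ∈ idealSpan k ε := by
  constructor
  · intro ha
    have hrel : ∀ ⦃x y : A⦄, idealRel ε x y →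
        (idealSpanCon k ε).mk' x = (idealSpanCon k ε).mk' y := by
      rintro x y ⟨rfl, u, v, rfl⟩
      refine (RingCon.eq _).2 (show u * ε * v - 0 ∈ idealSpan k ε from ?_)
      simpa using mul_mul_mem_idealSpan u v (self_mem_idealSpan (k := k) ε)
    have := congrArg (RingQuot.lift ⟨(idealSpanCon k ε).mk', hrel⟩)
      (show RingQuot.mkRingHom (idealRel ε) a = RingQuot.mkRingHom (idealRel ε) 0 by
        rw [← RingQuot.mkAlgHom_coe k, RingHom.coe_coe, ha, map_zero])
    rw [RingQuot.lift_mkRingHom_apply, RingQuot.lift_mkRingHom_apply] at this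
    simpa using (show a - 0 ∈ idealSpan k ε from (RingCon.eq _).1 this)
  · intro ha
    induction ha using Submodule.span_induction with
    | mem y hy =>
      obtain ⟨u, v, rfl⟩ := hy
      simpa using RingQuot.mkAlgHom_rel k (s := idealRel ε) ⟨rfl, u, v, rfl⟩
    | zero => simp
    | add a b _ _ ha hb => rw [map_add, ha, hb, add_zero]
    | smul c a _ ha => rw [map_smul, ha, smul_zero]

theorem ker_mkAlgHom_idealRel (ε : A) :
    LinearMap.ker (RingQuot.mkAlgHom k (idealRel ε)).toLinearMap = idealSpan k ε :=
  Submodule.ext fun a => mkAlgHom_idealRel_eq_zero_iff ε a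

end IdealSpan

section IdealQuotMap

variable {k A : Type*} [Field k] [Ring A] [Algebra k A]

/-- The map `C/CεC → A/AεA` induced by the inclusion of a subalgebra `C ∋ ε`. -/
def idealQuotMap (C : Subalgebra k A) {ε : A} (hε : ε ∈ C) :
    RingQuot (idealRel (⟨ε, hε⟩ : C)) →ₐ[k] RingQuot (idealRel ε) :=
  RingQuot.liftAlgHom k ⟨(RingQuot.mkAlgHom k (idealRel ε)).comp C.val, by
    rintro _ _ ⟨rfl, u, v, rfl⟩
    simpa using RingQuot.mkAlgHom_rel k (s := idealRel ε) ⟨rfl, u, v, rfl⟩⟩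

variable {C : Subalgebra k A} {ε : A} (hε : ε ∈ C)

theorem idealQuotMap_mkAlgHom (a : C) :
    idealQuotMap C hε (RingQuot.mkAlgHom k (idealRel (⟨ε, hε⟩ : C)) a) =
      RingQuot.mkAlgHom k (idealRel ε) (a : A) :=
  RingQuot.liftAlgHom_mkAlgHom_apply k _ _ a

theorem range_idealQuotMap :
    (idealQuotMap C hε).range = C.map (RingQuot.mkAlgHom k (idealRel ε)) := by
  ext q
  constructor
  · rintro ⟨p, rfl⟩
    obtain ⟨a, rfl⟩ := RingQuot.mkAlgHom_surjective k _ p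
    exact ⟨a, a.2, (idealQuotMap_mkAlgHom hε a).symm⟩
  · rintro ⟨a, ha, rfl⟩
    exact ⟨_, idealQuotMap_mkAlgHom hε ⟨a, ha⟩⟩

theorem injective_idealQuotMap
    (H : ∀ a : C, (a : A) ∈ idealSpan k ε → a ∈ idealSpan k (⟨ε, hε⟩ : C)) :
    Function.Injective (idealQuotMap C hε) := by
  refine (injective_iff_map_eq_zero _).2 fun q hq => ?_
  obtain ⟨a, rfl⟩ := RingQuot.mkAlgHom_surjective k _ q
  rw [idealQuotMap_mkAlgHom, mkAlgHom_idealRel_eq_zero_iff] at hq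
  exact (mkAlgHom_idealRel_eq_zero_iff _ _).2 (H a hq)

end IdealQuotMap

namespace IsReedy

variable {k A : Type*} [Field k] [Ring A] [Algebra k A]
  {ι : Type*} [Fintype ι] [DecidableEq ι] {e : ι → A} {deg : ι → ℕ} {Ap Am : Subalgebra k A}
  {l : ℕ} {ε : A}

theorem cornerSpace_univ_eq_iSup (h : IsReedy k e deg Ap Am) (j i : ι) :
    cornerSpace k (e j) (e i) Set.univ = ⨆ m, reedyBlock k e Ap Am j m i := by
  rw [← h.mul_range i j, range_reedyMulMap]

theorem iSupIndep_reedyBlock (h : IsReedy k e deg Ap Am) (j i : ι) :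
    iSupIndep fun m => reedyBlock k e Ap Am j m i :=
  ((injective_reedyMulMap_iff e _ _ j i).1 (h.mul_inj i j)).2

theorem deg_le_of_cornerSpace_plus_ne_bot (h : IsReedy k e deg Ap Am) {j i : ι}
    (hne : cornerSpace k (e j) (e i) (Ap : Set A) ≠ ⊥) : deg i ≤ deg j := by
  rcases eq_or_ne i j with rfl | hij
  · exact le_rfl
  · exact (h.offP i j hij hne).le

theorem deg_le_of_cornerSpace_minus_ne_bot (h : IsReedy k e deg Ap Am) {j i : ι}
    (hne : cornerSpace k (e j) (e i) (Am : Set A) ≠ ⊥) : deg j ≤ deg i := by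
  rcases eq_or_ne i j with rfl | hij
  · exact le_rfl
  · exact (h.offM i j hij hne).le

theorem reedyBlock_le_cornerSpace_univ (h : IsReedy k e deg Ap Am) (P M : Set A) (j m i : ι) :
    reedyBlock k e P M j m i ≤ cornerSpace k (e j) (e i) Set.univ :=
  cornerSpace_mul_cornerSpace_le_univ (h.idem m) P M

theorem cornerSpace_plus_le_reedyBlock (h : IsReedy k e deg Ap Am) (j i : ι) :
    cornerSpace k (e j) (e i) (Ap : Set A) ≤ reedyBlock k e Ap Am j i i := fun x hx => by
  have hei : e i ∈ cornerSpace k (e i) (e i) (Am : Set A) :=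
    mem_cornerSpace_subalgebra.2 ⟨e i, h.memM i, by rw [(h.idem i).eq, (h.idem i).eq]⟩
  simpa only [reedyBlock, (h.idem i).mul_eq_self_of_mem_cornerSpace_right hx] using
    Submodule.mul_mem_mul hx hei

theorem cornerSpace_minus_le_reedyBlock (h : IsReedy k e deg Ap Am) (j i : ι) :
    cornerSpace k (e j) (e i) (Am : Set A) ≤ reedyBlock k e Ap Am j j i := fun x hx => by
  have hej : e j ∈ cornerSpace k (e j) (e j) (Ap : Set A) :=
    mem_cornerSpace_subalgebra.2 ⟨e j, h.memP j, by rw [(h.idem j).eq, (h.idem j).eq]⟩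
  simpa only [reedyBlock, (h.idem j).mul_eq_self_of_mem_cornerSpace_left hx] using
    Submodule.mul_mem_mul hej hx

theorem cornerSpace_univ_le_iSup_left (h : IsReedy k e deg Ap Am) (j i : ι) :
    cornerSpace k (e j) (e i) Set.univ ≤ ⨆ m, ⨆ _ : deg m ≤ deg j, reedyBlock k e Ap Am j m i := by
  rw [h.cornerSpace_univ_eq_iSup]
  refine iSup_le fun m => ?_
  by_cases hP : cornerSpace k (e j) (e m) (Ap : Set A) = ⊥
  · simp [reedyBlock, hP]
  · exact le_iSup₂_of_le m (h.deg_le_of_cornerSpace_plus_ne_bot hP) le_rfl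

theorem cornerSpace_univ_le_iSup_right (h : IsReedy k e deg Ap Am) (j i : ι) :
    cornerSpace k (e j) (e i) Set.univ ≤ ⨆ m, ⨆ _ : deg m ≤ deg i, reedyBlock k e Ap Am j m i := by
  rw [h.cornerSpace_univ_eq_iSup]
  refine iSup_le fun m => ?_
  by_cases hM : cornerSpace k (e m) (e i) (Am : Set A) = ⊥
  · simp [reedyBlock, hM]
  · exact le_iSup₂_of_le m (h.deg_le_of_cornerSpace_minus_ne_bot hM) le_rfl

theorem cornerSpace_univ_mul_le (h : IsReedy k e deg Ap Am) {m : ι} (hm : deg m ≤ l)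
    (j i : ι) :
    cornerSpace k (e j) (e m) Set.univ * cornerSpace k (e m) (e i) Set.univ ≤
      ⨆ r, ⨆ _ : deg r ≤ l, reedyBlock k e Ap Am j r i := by
  refine (mul_le_mul' (h.cornerSpace_univ_le_iSup_right j m) le_rfl).trans ?_
  simp only [Submodule.iSup_mul]
  refine iSup₂_le fun p hp => ?_
  calc reedyBlock k e Ap Am j p m * cornerSpace k (e m) (e i) Set.univ
      = cornerSpace k (e j) (e p) Ap *
          (cornerSpace k (e p) (e m) Am * cornerSpace k (e m) (e i) Set.univ) :=
        mul_assoc _ _ _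
    _ ≤ cornerSpace k (e j) (e p) Ap * cornerSpace k (e p) (e i) Set.univ :=
        mul_le_mul' le_rfl (cornerSpace_mul_cornerSpace_le_univ (h.idem m) _ _)
    _ ≤ cornerSpace k (e j) (e p) Ap * ⨆ r, ⨆ _ : deg r ≤ deg p, reedyBlock k e Ap Am p r i :=
        mul_le_mul' le_rfl (h.cornerSpace_univ_le_iSup_left p i)
    _ ≤ _ := by
        simp only [Submodule.mul_iSup]
        refine iSup₂_le fun r hr => le_iSup₂_of_le r (hr.trans (hp.trans hm)) ?_
        rw [reedyBlock, reedyBlock, ← mul_assoc]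
        exact mul_le_mul' (cornerSpace_mul_cornerSpace_le (h.idem p) (h.memP p)) le_rfl

theorem mul_sum_deg_le (h : IsReedy k e deg Ap Am) {m : ι} (hm : deg m ≤ l) :
    e m * ∑ i : {i // deg i ≤ l}, e i.1 = e m := by
  rw [Finset.mul_sum, Finset.sum_eq_single ⟨m, hm⟩ (fun i _ hi => h.orth m i.1 fun him =>
    hi (Subtype.ext him.symm)) (fun hm => absurd (Finset.mem_univ _) hm), (h.idem m).eq]

theorem sum_deg_le_mul (h : IsReedy k e deg Ap Am) {m : ι} (hm : deg m ≤ l) :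
    (∑ i : {i // deg i ≤ l}, e i.1) * e m = e m := by
  rw [Finset.sum_mul, Finset.sum_eq_single ⟨m, hm⟩ (fun i _ hi => h.orth i.1 m fun him =>
    hi (Subtype.ext him)) (fun hm => absurd (Finset.mem_univ _) hm), (h.idem m).eq]

theorem reedyBlock_le_idealSpan (h : IsReedy k e deg Ap Am)
    (hε : ε = ∑ i : {i // deg i ≤ l}, e i.1) {m : ι} (hm : deg m ≤ l) (P M : Set A)
    (j i : ι) : reedyBlock k e P M j m i ≤ idealSpan k ε :=
  Submodule.mul_le.2 fun x hx y _ => by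
    have hxε : x * ε = x := by
      rw [← (h.idem m).mul_eq_self_of_mem_cornerSpace_right hx, mul_assoc, hε, h.mul_sum_deg_le hm]
    rw [← hxε]
    exact Submodule.subset_span ⟨x, y, rfl⟩

theorem mem_idealSpan_of_deg_le (h : IsReedy k e deg Ap Am)
    (hε : ε = ∑ i : {i // deg i ≤ l}, e i.1) {m : ι} (hm : deg m ≤ l) : e m ∈ idealSpan k ε :=
  Submodule.subset_span ⟨e m, 1, by rw [mul_one, hε, h.mul_sum_deg_le hm]⟩

theorem map_idealSpan_le (h : IsReedy k e deg Ap Am) (hε : ε = ∑ i : {i // deg i ≤ l}, e i.1)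
    (j i : ι) :
    (idealSpan k ε).map (LinearMap.mulLeftRight k (e j, e i)) ≤
      ⨆ m, ⨆ _ : deg m ≤ l, reedyBlock k e Ap Am j m i := by
  rw [idealSpan, Submodule.map_span, Submodule.span_le]
  rintro _ ⟨_, ⟨u, v, rfl⟩, rfl⟩
  have hexpand : e j * (u * ε * v) * e i =
      ∑ m : {m // deg m ≤ l}, (e j * u * e m.1) * (e m.1 * v * e i) := by
    simp only [hε, Finset.mul_sum, Finset.sum_mul]
    refine Finset.sum_congr rfl fun m _ => ?_
    simp only [mul_assoc, (h.idem m.1).mul_self_mul]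
  rw [SetLike.mem_coe, LinearMap.mulLeftRight_apply, hexpand]
  exact Submodule.sum_mem _ fun m _ => h.cornerSpace_univ_mul_le m.2 j i
    (Submodule.mul_mem_mul (mem_cornerSpace_univ.2 ⟨u, rfl⟩) (mem_cornerSpace_univ.2 ⟨v, rfl⟩))

theorem disjoint_iSup_reedyBlock_idealSpan (h : IsReedy k e deg Ap Am)
    (hε : ε = ∑ i : {i // deg i ≤ l}, e i.1) (j i : ι) :
    Disjoint (⨆ m, ⨆ _ : l < deg m, reedyBlock k e Ap Am j m i) (idealSpan k ε) := by
  refine Submodule.disjoint_def.2 fun x hx hxI => ?_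
  have hxcorner : x ∈ cornerSpace k (e j) (e i) Set.univ :=
    iSup₂_le (fun m _ => h.reedyBlock_le_cornerSpace_univ _ _ j m i) hx
  have hfix : e j * x * e i = x := by
    rw [(h.idem j).mul_eq_self_of_mem_cornerSpace_left hxcorner,
      (h.idem i).mul_eq_self_of_mem_cornerSpace_right hxcorner]
  have hlow := h.map_idealSpan_le hε j i ⟨x, hxI, hfix⟩
  have hdisj := (h.iSupIndep_reedyBlock j i).disjoint_biSup_biSup
    (s := {m | l < deg m}) (t := {m | deg m ≤ l})
    (Set.disjoint_left.2 fun m (hm : l < deg m) (hm' : deg m ≤ l) => hm'.not_gt hm)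
  exact Submodule.disjoint_def.1 hdisj x hx hlow

theorem disjoint_cornerSpace_plus_idealSpan (h : IsReedy k e deg Ap Am)
    (hε : ε = ∑ i : {i // deg i ≤ l}, e i.1) (j : ι) {i : ι} (hi : l < deg i) :
    Disjoint (cornerSpace k (e j) (e i) (Ap : Set A)) (idealSpan k ε) :=
  (h.disjoint_iSup_reedyBlock_idealSpan hε j i).mono_left
    ((h.cornerSpace_plus_le_reedyBlock j i).trans (le_iSup₂_of_le i hi le_rfl))

theorem disjoint_cornerSpace_minus_idealSpan (h : IsReedy k e deg Ap Am)
    (hε : ε = ∑ i : {i // deg i ≤ l}, e i.1) {j : ι} (hj : l < deg j) (i : ι) :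
    Disjoint (cornerSpace k (e j) (e i) (Am : Set A)) (idealSpan k ε) :=
  (h.disjoint_iSup_reedyBlock_idealSpan hε j i).mono_left
    ((h.cornerSpace_minus_le_reedyBlock j i).trans (le_iSup₂_of_le j hj le_rfl))

theorem mem_of_forall_corner_mem (h : IsReedy k e deg Ap Am) {C : Subalgebra k A}
    (hC : ∀ i, e i ∈ C) {p : Submodule k C} {a : C}
    (ha : ∀ j i, ⟨e j, hC j⟩ * a * ⟨e i, hC i⟩ ∈ p) : a ∈ p := by
  have hpeirce : a = ∑ j, ∑ i, ⟨e j, hC j⟩ * a * ⟨e i, hC i⟩ :=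
    Subtype.ext (by simp [← Finset.mul_sum, ← Finset.sum_mul, h.complete])
  rw [hpeirce]
  exact Submodule.sum_mem _ fun j _ => Submodule.sum_mem _ fun i _ => ha j i

theorem injective_idealQuotMap_plus (h : IsReedy k e deg Ap Am)
    (hε : ε = ∑ i : {i // deg i ≤ l}, e i.1) (hP : ε ∈ Ap) :
    Function.Injective (idealQuotMap Ap hP) :=
  injective_idealQuotMap hP fun a ha => h.mem_of_forall_corner_mem h.memP fun j i => by
    by_cases hi : deg i ≤ l
    · refine Submodule.subset_span ⟨⟨e j, h.memP j⟩ * a, ⟨e i, h.memP i⟩, Subtype.ext ?_⟩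
      change e j * a * ε * e i = e j * a * e i
      rw [mul_assoc _ ε, hε, h.sum_deg_le_mul hi]
    · have hzero : (⟨e j, h.memP j⟩ * a * ⟨e i, h.memP i⟩ : Ap) = 0 :=
        Subtype.ext <| Submodule.disjoint_def.1
          (h.disjoint_cornerSpace_plus_idealSpan hε j (not_le.1 hi)) _
          (mem_cornerSpace_subalgebra.2 ⟨a, a.2, rfl⟩) (mul_mul_mem_idealSpan _ _ ha)
      exact hzero ▸ zero_mem _

theorem injective_idealQuotMap_minus (h : IsReedy k e deg Ap Am)
    (hε : ε = ∑ i : {i // deg i ≤ l}, e i.1) (hM : ε ∈ Am) :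
    Function.Injective (idealQuotMap Am hM) :=
  injective_idealQuotMap hM fun a ha => h.mem_of_forall_corner_mem h.memM fun j i => by
    by_cases hj : deg j ≤ l
    · refine Submodule.subset_span ⟨⟨e j, h.memM j⟩, a * ⟨e i, h.memM i⟩, Subtype.ext ?_⟩
      change e j * ε * (a * e i) = e j * a * e i
      rw [hε, h.mul_sum_deg_le hj, mul_assoc]
    · have hzero : (⟨e j, h.memM j⟩ * a * ⟨e i, h.memM i⟩ : Am) = 0 :=
        Subtype.ext <| Submodule.disjoint_def.1
          (h.disjoint_cornerSpace_minus_idealSpan hε (not_le.1 hj) i) _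
          (mem_cornerSpace_subalgebra.2 ⟨a, a.2, rfl⟩) (mul_mul_mem_idealSpan _ _ ha)
      exact hzero ▸ zero_mem _

theorem injective_reedyMulMap_subtype (h : IsReedy k e deg Ap Am) {p : ι → Prop}
    [DecidablePred p] (j i : {m // p m}) :
    Function.Injective (reedyMulMap k (fun m : {m // p m} => e m) Ap Am j i) := by
  have hinj := (injective_reedyMulMap_iff e _ _ j.1 i.1).1 (h.mul_inj i j)
  exact (injective_reedyMulMap_iff _ _ _ j i).2
    ⟨fun m => hinj.1 m, hinj.2.comp Subtype.val_injective⟩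

theorem range_reedyMulMap_subtype {p : ι → Prop} [DecidablePred p] (j i : {m // p m}) :
    LinearMap.range (reedyMulMap k (fun m : {m // p m} => e m) Ap Am j i) =
      ⨆ m, ⨆ _ : p m, reedyBlock k e Ap Am j m i := by
  rw [range_reedyMulMap, iSup_subtype]
  rfl

theorem quotient_reedyMulMap (h : IsReedy k e deg Ap Am)
    (hε : ε = ∑ i : {i // deg i ≤ l}, e i.1) {B : Type*} [Ring B] [Algebra k B]
    (π : A →ₐ[k] B) (hπ : Function.Surjective π)
    (hker : LinearMap.ker π.toLinearMap = idealSpan k ε) (j i : {m // l < deg m}) :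
    Function.Injective
        (reedyMulMap k (π ∘ fun m : {m // l < deg m} => e m) (π '' Ap) (π '' Am) j i) ∧
      LinearMap.range
          (reedyMulMap k (π ∘ fun m : {m // l < deg m} => e m) (π '' Ap) (π '' Am) j i) =
        cornerSpace k (π (e j)) (π (e i)) Set.univ := by
  refine ⟨injective_reedyMulMap_map π (LinearMap.injective_comp_of_disjoint
    (h.injective_reedyMulMap_subtype j i) ?_), ?_⟩
  · rw [range_reedyMulMap_subtype, hker]
    exact h.disjoint_iSup_reedyBlock_idealSpan hε j i
  · have hlow : (⨆ m, ⨆ _ : ¬ l < deg m, reedyBlock k e Ap Am j m i).map π.toLinearMap = ⊥ :=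
      LinearMap.le_ker_iff_map.1 <| hker ▸ iSup₂_le fun m hm =>
        h.reedyBlock_le_idealSpan hε (not_lt.1 hm) _ _ j i
    rw [range_reedyMulMap_map, range_reedyMulMap_subtype, ← Set.image_univ_of_surjective hπ,
      ← map_cornerSpace, h.cornerSpace_univ_eq_iSup,
      iSup_split (fun m => reedyBlock k e Ap Am j m i) (l < deg ·), Submodule.map_sup, hlow,
      sup_bot_eq]

theorem quotient (h : IsReedy k e deg Ap Am) (hε : ε = ∑ i : {i // deg i ≤ l}, e i.1)
    {B : Type*} [Ring B] [Algebra k B] (π : A →ₐ[k] B) (hπ : Function.Surjective π)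
    (hker : LinearMap.ker π.toLinearMap = idealSpan k ε) :
    IsReedy k (fun i : {i // l < deg i} => π (e i)) (fun i => deg i) (Ap.map π) (Am.map π) where
  idem i := (h.idem i).map π
  orth i j hij := by rw [← map_mul, h.orth i j (Subtype.val_injective.ne hij), map_zero]
  complete := by
    have hlow : ∀ i : {i // ¬ l < deg i}, π (e i) = 0 := fun i => by
      rw [← AlgHom.toLinearMap_apply, ← LinearMap.mem_ker, hker]
      exact h.mem_idealSpan_of_deg_le hε (not_lt.1 i.2)
    calc ∑ i : {i // l < deg i}, π (e i)
        = ∑ i : {i // l < deg i}, π (e i) + ∑ i : {i // ¬ l < deg i}, π (e i) := by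
          rw [Finset.sum_eq_zero fun i _ => hlow i, add_zero]
      _ = ∑ i, π (e i) := Fintype.sum_subtype_add_sum_subtype (l < deg ·) (π ∘ e)
      _ = 1 := by rw [← map_sum, h.complete, map_one]
  memP i := ⟨e i, h.memP i, rfl⟩
  memM i := ⟨e i, h.memM i, rfl⟩
  diagP i := by
    rw [Subalgebra.coe_map, ← map_cornerSpace, Submodule.finrank_map_of_disjoint_ker _
      (hker ▸ h.disjoint_cornerSpace_plus_idealSpan hε i i.2), h.diagP]
  offP i j hij hne := h.offP i j (Subtype.val_injective.ne hij) fun hbot => hne <| by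
    rw [Subalgebra.coe_map, ← map_cornerSpace, hbot, Submodule.map_bot]
  diagM i := by
    rw [Subalgebra.coe_map, ← map_cornerSpace, Submodule.finrank_map_of_disjoint_ker _
      (hker ▸ h.disjoint_cornerSpace_minus_idealSpan hε i.2 i), h.diagM]
  offM i j hij hne := h.offM i j (Subtype.val_injective.ne hij) fun hbot => hne <| by
    rw [Subalgebra.coe_map, ← map_cornerSpace, hbot, Submodule.map_bot]
  mul_inj i j := (h.quotient_reedyMulMap hε π hπ hker j i).1
  mul_range i j := (h.quotient_reedyMulMap hε π hπ hker j i).2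

end IsReedy

theorem reedy_quotient_is_reedy_general
    (k : Type*) [Field k] (A : Type*) [Ring A] [Algebra k A]
    {ι : Type*} [Fintype ι] [DecidableEq ι]
    (e : ι → A) (deg : ι → ℕ) (Ap Am : Subalgebra k A)
    (h : IsReedy k e deg Ap Am) (l : ℕ)
    (ε : A) (hεdef : ε = ∑ i : {i : ι // deg i ≤ l}, e i.1)
    (hP : ε ∈ Ap) (hM : ε ∈ Am) :
    ∃ (φ : RingQuot (idealRel (⟨ε, hP⟩ : Ap)) →ₐ[k] RingQuot (idealRel ε))
      (ψ : RingQuot (idealRel (⟨ε, hM⟩ : Am)) →ₐ[k] RingQuot (idealRel ε)),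
      (∀ a : Ap, φ (RingQuot.mkAlgHom k (idealRel (⟨ε, hP⟩ : Ap)) a)
          = RingQuot.mkAlgHom k (idealRel ε) (a : A)) ∧
      (∀ a : Am, ψ (RingQuot.mkAlgHom k (idealRel (⟨ε, hM⟩ : Am)) a)
          = RingQuot.mkAlgHom k (idealRel ε) (a : A)) ∧
      Function.Injective φ ∧ Function.Injective ψ ∧
      IsReedy k (fun i : {i : ι // l < deg i} =>
          RingQuot.mkAlgHom k (idealRel ε) (e i.1))
        (fun i => deg i.1) φ.range ψ.range := by
  refine ⟨idealQuotMap Ap hP, idealQuotMap Am hM, idealQuotMap_mkAlgHom hP,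
    idealQuotMap_mkAlgHom hM, h.injective_idealQuotMap_plus hεdef hP,
    h.injective_idealQuotMap_minus hεdef hM, ?_⟩
  rw [range_idealQuotMap, range_idealQuotMap]
  exact h.quotient hεdef _ (RingQuot.mkAlgHom_surjective k _) (ker_mkAlgHom_idealRel ε)

/-- If `(A, A⁺, A⁻)` is Reedy and `e = ε₀ + ⋯ + εₗ`, then
`(A/AeA, A⁺/A⁺eA⁺, A⁻/A⁻eA⁻)` is Reedy: the canonical algebra maps
`A⁺/A⁺eA⁺ → A/AeA` and `A⁻/A⁻eA⁻ → A/AeA` are injective, and `A/AeA` is Reedy with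
respect to their images, the residual idempotents and the inherited degree function. -/
theorem reedy_quotient_is_reedy
    (k : Type*) [Field k] (A : Type*) [Ring A] [Algebra k A] [FiniteDimensional k A]
    {ι : Type*} [Fintype ι] [DecidableEq ι]
    (e : ι → A) (deg : ι → ℕ) (Ap Am : Subalgebra k A)
    (h : IsReedy k e deg Ap Am) (l : ℕ)
    (ε : A) (hεdef : ε = ∑ i : {i : ι // deg i ≤ l}, e i.1)
    (hP : ε ∈ Ap) (hM : ε ∈ Am) :
    ∃ (φ : RingQuot (idealRel (⟨ε, hP⟩ : Ap)) →ₐ[k] RingQuot (idealRel ε))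
      (ψ : RingQuot (idealRel (⟨ε, hM⟩ : Am)) →ₐ[k] RingQuot (idealRel ε)),
      (∀ a : Ap, φ (RingQuot.mkAlgHom k (idealRel (⟨ε, hP⟩ : Ap)) a)
          = RingQuot.mkAlgHom k (idealRel ε) (a : A)) ∧
      (∀ a : Am, ψ (RingQuot.mkAlgHom k (idealRel (⟨ε, hM⟩ : Am)) a)
          = RingQuot.mkAlgHom k (idealRel ε) (a : A)) ∧
      Function.Injective φ ∧ Function.Injective ψ ∧
      IsReedy k (fun i : {i : ι // l < deg i} =>
          RingQuot.mkAlgHom k (idealRel ε) (e i.1))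
        (fun i => deg i.1) φ.range ψ.range :=
  reedy_quotient_is_reedy_general k A e deg Ap Am h l ε hεdef hP hM
end

section
/- Let A be a finite-dimensional k-algebra satisfying the Setup, and let e be an idempotent of E of minimal degree and π : A⁺ → A⁺/A⁺εA⁺ the canonical surjection, where ε is the sum of all idempotents of minimal degree. Then for every idempotent η ∈ E of degree strictly greater than the minimum, ker(π)·η = A⁺εA⁺η = 0, hence right multiplication induces an isomorphism of left A⁺-modules (A⁺/A⁺εA⁺)η ≅ A⁺η. -/
open scoped TensorProduct DirectSum

/-!
A summand `e_j b e_{i₀}` of `ε b η` lies in the corner `e_j A⁺ e_{i₀}` with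
`deg e_j = t < deg e_{i₀}`, and this corner vanishes because nonzero off-diagonal corners of `A⁺`
strictly raise the degree. Hence `A⁺εA⁺ · η = 0`. As `η` is idempotent, an element `aη` of `A⁺η`
lying in `A⁺εA⁺` equals `aη · η = 0`, so the quotient map is injective on `A⁺η`.
-/

section Corner

variable {k : Type*} [Field k] {A : Type*} [Ring A] [Algebra k A]

theorem mul_mul_mem_cornerSpace (f e : A) {S : Set A} {a : A} (ha : a ∈ S) :
    f * a * e ∈ cornerSpace k f e S :=
  Submodule.subset_span ⟨a, ha, rfl⟩

variable {ι : Type*} {e : ι → A} {deg : ι → ℕ} {S : Set A}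

theorem mul_mul_eq_zero_of_deg_le
    (hoff : ∀ i j, i ≠ j → cornerSpace k (e j) (e i) S ≠ ⊥ → deg i < deg j)
    {i j : ι} (hij : i ≠ j) (hdeg : deg j ≤ deg i) {b : A} (hb : b ∈ S) :
    e j * b * e i = 0 := by
  have hbot : cornerSpace k (e j) (e i) S = ⊥ :=
    not_ne_iff.1 fun hne => (hoff i j hij hne).not_ge hdeg
  simpa [hbot] using mul_mul_mem_cornerSpace (k := k) (e j) (e i) hb

theorem sum_deg_eq_mul_mul_eq_zero_of_lt_deg [Fintype ι]
    (hoff : ∀ i j, i ≠ j → cornerSpace k (e j) (e i) S ≠ ⊥ → deg i < deg j)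
    {t : ℕ} {i : ι} (hi : t < deg i) {b : A} (hb : b ∈ S) :
    (∑ j : {j : ι // deg j = t}, e j.1) * b * e i = 0 := by
  rw [Finset.sum_mul, Finset.sum_mul]
  refine Finset.sum_eq_zero fun j _ => mul_mul_eq_zero_of_deg_le hoff ?_ (j.2.trans_le hi.le) hb
  rintro rfl
  exact hi.ne' j.2

end Corner

section Ring

variable {R : Type*} [Ring R]

theorem mul_eq_zero_of_mem_span_mul {a c x : R} (h : ∀ b, a * b * c = 0)
    (hx : x ∈ Submodule.span R {y | ∃ b, y = a * b}) : x * c = 0 :=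
  (Submodule.span_le (p := LinearMap.ker (LinearMap.toSpanSingleton R R c))).2
    (by rintro _ ⟨b, rfl⟩; exact h b) hx

theorem disjoint_span_singleton_of_mul_eq_zero {I : Submodule R R} {c : R}
    (hc : IsIdempotentElem c) (h : ∀ x ∈ I, x * c = 0) : Disjoint I (Submodule.span R {c}) := by
  refine Submodule.disjoint_def.2 fun x hxI hxc => ?_
  obtain ⟨a, rfl⟩ := Submodule.mem_span_singleton.1 hxc
  simpa only [smul_eq_mul, mul_assoc, hc.eq] using h _ hxI

end Ring

theorem Submodule.nonempty_map_mkQ_linearEquiv_of_disjoint {R M : Type*} [Ring R]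
    [AddCommGroup M] [Module R M] {p N : Submodule R M} (h : Disjoint p N) :
    Nonempty (N.map p.mkQ ≃ₗ[R] N) := by
  have hinj : Function.Injective (p.mkQ.domRestrict N) :=
    LinearMap.injective_domRestrict_iff.2 (by rwa [Submodule.ker_mkQ, disjoint_comm])
  exact ⟨(LinearEquiv.ofEq _ _ (LinearMap.range_domRestrict N p.mkQ).symm).trans
    (LinearEquiv.ofInjective _ hinj).symm⟩

theorem setup_kernel_annihilates_higher_idempotent_general
    (k : Type*) [Field k] (A : Type*) [Ring A] [Algebra k A]
    {ι : Type*} [Fintype ι]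
    (e : ι → A) (deg : ι → ℕ) (Ap : Subalgebra k A)
    (hidem : ∀ i, IsIdempotentElem (e i))
    (hoff : ∀ i j, i ≠ j → cornerSpace k (e j) (e i) (Ap : Set A) ≠ ⊥ → deg i < deg j)
    (t : ℕ)
    (ε : Ap) (hεdef : (ε : A) = ∑ i : {i : ι // deg i = t}, e i.1)
    (i₀ : ι) (hi₀ : t < deg i₀) (η : Ap) (hη : (η : A) = e i₀)
    (K : Ideal Ap) (hK : K = Submodule.span Ap {y : Ap | ∃ b : Ap, y = ε * b}) :
    (∀ x ∈ K, x * η = 0) ∧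
    Disjoint K (Submodule.span Ap ({η} : Set Ap)) ∧
    Nonempty ((Submodule.map K.mkQ (Submodule.span Ap ({η} : Set Ap))) ≃ₗ[Ap]
      (Submodule.span Ap ({η} : Set Ap))) := by
  have hεη (b : Ap) : ε * b * η = 0 := Subtype.ext <| by
    simpa [hεdef, hη] using sum_deg_eq_mul_mul_eq_zero_of_lt_deg hoff hi₀ b.2
  have hann : ∀ x ∈ K, x * η = 0 := fun x hx => mul_eq_zero_of_mem_span_mul hεη (hK ▸ hx)
  have hηidem : IsIdempotentElem η := Subtype.ext <| by simpa [hη] using (hidem i₀).eq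
  have hdisj := disjoint_span_singleton_of_mul_eq_zero hηidem hann
  exact ⟨hann, hdisj, Submodule.nonempty_map_mkQ_linearEquiv_of_disjoint hdisj⟩

/-- In the Setup, let `ε` be the sum of all idempotents of minimal degree
`t`, `K = A⁺εA⁺` the kernel of the canonical surjection `π : A⁺ → A⁺/A⁺εA⁺`, and `η` an
idempotent of degree `> t`. Then `K·η = 0`, and hence right multiplication induces an
isomorphism of left `A⁺`-modules `(A⁺/A⁺εA⁺)η ≅ A⁺η` (the quotient map is injective on
`A⁺η` with image `(A⁺/K)η`). -/
theorem setup_kernel_annihilates_higher_idempotent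
    (k : Type*) [Field k] (A : Type*) [Ring A] [Algebra k A] [FiniteDimensional k A]
    {ι : Type*} [Fintype ι] [DecidableEq ι]
    (e : ι → A) (deg : ι → ℕ) (Ap : Subalgebra k A)
    (hidem : ∀ i, IsIdempotentElem (e i))
    (horth : ∀ i j, i ≠ j → e i * e j = 0)
    (hcomplete : ∑ i, e i = 1)
    (hmem : ∀ i, e i ∈ Ap)
    (hdiag : ∀ i, Module.finrank k (cornerSpace k (e i) (e i) (Ap : Set A)) = 1)
    (hoff : ∀ i j, i ≠ j → cornerSpace k (e j) (e i) (Ap : Set A) ≠ ⊥ → deg i < deg j)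
    (t : ℕ) (ht : ∀ i, t ≤ deg i)
    (ε : Ap) (hεdef : (ε : A) = ∑ i : {i : ι // deg i = t}, e i.1)
    (i₀ : ι) (hi₀ : t < deg i₀) (η : Ap) (hη : (η : A) = e i₀)
    (K : Ideal Ap) (hK : K = Submodule.span Ap {y : Ap | ∃ b : Ap, y = ε * b}) :
    (∀ x ∈ K, x * η = 0) ∧
    Disjoint K (Submodule.span Ap ({η} : Set Ap)) ∧
    Nonempty ((Submodule.map K.mkQ (Submodule.span Ap ({η} : Set Ap))) ≃ₗ[Ap]
      (Submodule.span Ap ({η} : Set Ap))) :=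
  setup_kernel_annihilates_higher_idempotent_general k A e deg Ap hidem hoff t ε hεdef i₀ hi₀ η hη K
    hK
end

section
/- Let A = k[•→•] be the 2×2 upper triangular matrix algebra over a field k, with idempotents e₀ = E₁₁ (degree 0) and e₁ = E₂₂ (degree 1), and let S = A⁺ = A⁻ be the diagonal subalgebra k e₀ × k e₁. Then (A, A⁺, A⁻) is not Reedy (the multiplication map A⁺ ⊗_S A⁻ → A is not surjective), yet the multiplication map Ae₀ ⊗_{e₀Ae₀} e₀A → Ae₀A is bijective and both e₀Ae₀ ≅ k and A/Ae₀A ≅ k are Reedy algebras. -/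
open scoped TensorProduct DirectSum

/-! The subalgebra generated by `e₀, e₁` lies in the centraliser of `e₀`, so its corner
`e₀ S e₁` vanishes; hence every summand of the Reedy multiplication map into `e₀ A e₁` is
zero, although `u ∈ e₀ A e₁`. On the other hand `A e₀ = k e₀` is a line, so every tensor in
`A e₀ ⊗ e₀ A` is `e₀ ⊗ n`, which multiplies to `n`: the multiplication map is injective, and
the balanced relations, which it kills, are zero. The ideal `A e₀ A` contains `e₀` and `u`
but not `e₁`, since `e₁ A e₀ = 0`, so it has codimension one. -/

section Corners

variable {k : Type*} [Field k] {A : Type*} [Ring A] [Algebra k A]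

theorem exists_eq_mul_right_of_mem_span {e x : A}
    (hx : x ∈ Submodule.span k {x : A | ∃ a, x = a * e}) : ∃ a, x = a * e := by
  have hle : Submodule.span k {x : A | ∃ a, x = a * e}
      ≤ LinearMap.range (LinearMap.mulRight k e) :=
    Submodule.span_le.mpr fun _ ⟨a, h⟩ => ⟨a, h.symm⟩
  obtain ⟨a, rfl⟩ := hle hx
  exact ⟨a, rfl⟩

theorem exists_eq_mul_left_of_mem_span {e x : A}
    (hx : x ∈ Submodule.span k {x : A | ∃ b, x = e * b}) : ∃ b, x = e * b := by
  have hle : Submodule.span k {x : A | ∃ b, x = e * b}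
      ≤ LinearMap.range (LinearMap.mulLeft k e) :=
    Submodule.span_le.mpr fun _ ⟨b, h⟩ => ⟨b, h.symm⟩
  obtain ⟨b, rfl⟩ := hle hx
  exact ⟨b, rfl⟩

@[simp]
theorem mulTensor_tmul (M N : Submodule k A) (m : M) (n : N) :
    mulTensor k M N (m ⊗ₜ n) = (m : A) * n :=
  rfl

theorem mulTensor_eq_zero_of_eq_bot {M N : Submodule k A} (h : M = ⊥ ∨ N = ⊥) :
    mulTensor k M N = 0 := by
  refine TensorProduct.ext' fun m n => ?_
  rcases h with rfl | rfl
  · simp [(Submodule.mem_bot k).mp m.2]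
  · simp [(Submodule.mem_bot k).mp n.2]

theorem reedyMulMap_eq_zero {ι : Type*} [Fintype ι] [DecidableEq ι] {e : ι → A} {P M : Set A}
    {j i : ι}
    (h : ∀ l, cornerSpace k (e j) (e l) P = ⊥ ∨ cornerSpace k (e l) (e i) M = ⊥) :
    reedyMulMap k e P M j i = 0 :=
  DirectSum.linearMap_ext k fun l => LinearMap.ext fun t => by
    rw [LinearMap.comp_apply, reedyMulMap, DirectSum.toModule_lof,
      mulTensor_eq_zero_of_eq_bot (h l), LinearMap.zero_comp, LinearMap.zero_apply]

theorem IsReedy.cornerSpace_univ_eq_bot {ι : Type*} [Fintype ι] [DecidableEq ι] {e : ι → A}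
    {deg : ι → ℕ} {Ap Am : Subalgebra k A} (hR : IsReedy k e deg Ap Am) {j i : ι}
    (h : ∀ l, cornerSpace k (e j) (e l) (Ap : Set A) = ⊥ ∨
      cornerSpace k (e l) (e i) (Am : Set A) = ⊥) :
    cornerSpace k (e j) (e i) Set.univ = ⊥ := by
  rw [← hR.mul_range, reedyMulMap_eq_zero h, LinearMap.range_zero]

theorem mul_mul_eq_zero_of_mem_adjoin {e₀ e₁ s : A} (h01 : e₀ * e₁ = 0) (h10 : e₁ * e₀ = 0)
    (hs : s ∈ Algebra.adjoin k {e₀, e₁}) : e₀ * s * e₁ = 0 := by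
  have hle : Algebra.adjoin k {e₀, e₁} ≤ Subalgebra.centralizer k {e₀} := by
    refine Algebra.adjoin_le (Set.insert_subset_iff.mpr ⟨?_, Set.singleton_subset_iff.mpr ?_⟩)
    · exact Subalgebra.mem_centralizer_iff k |>.mpr fun g hg => by rw [hg]
    · exact Subalgebra.mem_centralizer_iff k |>.mpr fun g hg => by rw [hg, h01, h10]
  have hcomm := (Subalgebra.mem_centralizer_iff k).mp (hle hs) e₀ rfl
  rw [hcomm, mul_assoc, h01, mul_zero]

theorem cornerSpace_adjoin_eq_bot {e₀ e₁ : A} (h01 : e₀ * e₁ = 0) (h10 : e₁ * e₀ = 0) :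
    cornerSpace k e₀ e₁ (Algebra.adjoin k {e₀, e₁} : Set A) = ⊥ := by
  rw [cornerSpace, Submodule.span_eq_bot]
  rintro _ ⟨s, hs, rfl⟩
  exact mul_mul_eq_zero_of_mem_adjoin h01 h10 hs

variable {e : A}

theorem mul_mem_span_singleton_of_span_eq_top {s : Set A}
    (hs : Submodule.span k s = ⊤) (he : ∀ x ∈ s, x * e ∈ k ∙ e) (a : A) :
    a * e ∈ k ∙ e := by
  have hle : Submodule.span k s ≤ (k ∙ e).comap (LinearMap.mulRight k e) :=
    Submodule.span_le.mpr he
  exact hle (hs ▸ Submodule.mem_top)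

theorem finrank_cornerSpace_eq_one (he : IsIdempotentElem e) (he0 : e ≠ 0)
    (hAe : ∀ a : A, a * e ∈ k ∙ e) : Module.finrank k (cornerSpace k e e Set.univ) = 1 := by
  suffices cornerSpace k e e Set.univ = k ∙ e by rw [this, finrank_span_singleton he0]
  refine le_antisymm (Submodule.span_le.mpr ?_) (Submodule.span_le.mpr ?_)
  · rintro _ ⟨a, -, rfl⟩
    obtain ⟨α, hα⟩ := Submodule.mem_span_singleton.mp (hAe a)
    rw [mul_assoc, ← hα, mul_smul_comm, he.eq]
    exact Submodule.smul_mem _ _ (Submodule.mem_span_singleton_self e)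
  · exact Set.singleton_subset_iff.mpr
      (Submodule.subset_span ⟨1, trivial, by rw [mul_one, he.eq]⟩)

theorem range_mulTensor_eq_span (he : IsIdempotentElem e) :
    LinearMap.range (mulTensor k (Submodule.span k {x : A | ∃ a, x = a * e})
        (Submodule.span k {x : A | ∃ b, x = e * b}))
      = Submodule.span k {x : A | ∃ a b, x = a * e * b} := by
  have hprod (a b : A) : a * e * (e * b) = a * e * b := by rw [← mul_assoc, mul_assoc a, he.eq]
  refine le_antisymm ?_ (Submodule.span_le.mpr ?_)
  · rintro _ ⟨t, rfl⟩
    induction t using TensorProduct.induction_on with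
    | zero => simp
    | tmul m n =>
      obtain ⟨a, ha⟩ := exists_eq_mul_right_of_mem_span m.2
      obtain ⟨b, hb⟩ := exists_eq_mul_left_of_mem_span n.2
      rw [mulTensor_tmul, ha, hb, hprod]
      exact Submodule.subset_span ⟨a, b, rfl⟩
    | add x y hx hy => exact map_add (mulTensor k _ _) x y ▸ Submodule.add_mem _ hx hy
  · rintro _ ⟨a, b, rfl⟩
    exact ⟨⟨a * e, Submodule.subset_span ⟨a, rfl⟩⟩ ⊗ₜ
      ⟨e * b, Submodule.subset_span ⟨b, rfl⟩⟩, hprod a b⟩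

theorem ker_mulTensor_eq_bot (he : IsIdempotentElem e) (hAe : ∀ a : A, a * e ∈ k ∙ e) :
    LinearMap.ker (mulTensor k (Submodule.span k {x : A | ∃ a, x = a * e})
        (Submodule.span k {x : A | ∃ b, x = e * b})) = ⊥ := by
  set M := Submodule.span k {x : A | ∃ a, x = a * e}
  set N := Submodule.span k {x : A | ∃ b, x = e * b}
  let eM : M := ⟨e, Submodule.subset_span ⟨1, (one_mul e).symm⟩⟩
  have htmul (t : M ⊗[k] N) : ∃ n : N, t = eM ⊗ₜ n := by
    induction t using TensorProduct.induction_on with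
    | zero => exact ⟨0, (TensorProduct.tmul_zero _ _).symm⟩
    | tmul m n =>
      obtain ⟨a, ha⟩ := exists_eq_mul_right_of_mem_span m.2
      obtain ⟨α, hα⟩ := Submodule.mem_span_singleton.mp (hAe a)
      have hm : m = α • eM := Subtype.ext (by rw [Submodule.coe_smul, ha, hα])
      exact ⟨α • n, by rw [hm, TensorProduct.smul_tmul]⟩
    | add x y hx hy =>
      obtain ⟨n₁, rfl⟩ := hx
      obtain ⟨n₂, rfl⟩ := hy
      exact ⟨n₁ + n₂, (TensorProduct.tmul_add _ _ _).symm⟩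
  refine LinearMap.ker_eq_bot'.mpr fun t ht => ?_
  obtain ⟨n, rfl⟩ := htmul t
  obtain ⟨b, hb⟩ := exists_eq_mul_left_of_mem_span n.2
  have hn : n = 0 := Subtype.ext <| by
    rw [mulTensor_tmul, hb, ← mul_assoc, he.eq] at ht
    rw [hb, ht, ZeroMemClass.coe_zero]
  rw [hn, TensorProduct.tmul_zero]

theorem span_balanced_le_ker_mulTensor (he : IsIdempotentElem e) :
    Submodule.span k {z : ↥(Submodule.span k {x : A | ∃ a, x = a * e})
            ⊗[k] ↥(Submodule.span k {x : A | ∃ b, x = e * b}) |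
          ∃ a x b : A,
            z = (⟨a * e * x * e, Submodule.subset_span ⟨a * e * x, rfl⟩⟩ :
                  Submodule.span k {x : A | ∃ a, x = a * e})
                ⊗ₜ[k] (⟨e * b, Submodule.subset_span ⟨b, rfl⟩⟩ :
                  Submodule.span k {x : A | ∃ b, x = e * b})
              - (⟨a * e, Submodule.subset_span ⟨a, rfl⟩⟩ :
                  Submodule.span k {x : A | ∃ a, x = a * e})
                ⊗ₜ[k] (⟨e * (x * (e * b)), Submodule.subset_span ⟨x * (e * b), rfl⟩⟩ :
                  Submodule.span k {x : A | ∃ b, x = e * b})}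
      ≤ LinearMap.ker (mulTensor k (Submodule.span k {x : A | ∃ a, x = a * e})
        (Submodule.span k {x : A | ∃ b, x = e * b})) := by
  refine Submodule.span_le.mpr ?_
  rintro _ ⟨a, x, b, rfl⟩
  rw [SetLike.mem_coe, LinearMap.mem_ker, map_sub, mulTensor_tmul, mulTensor_tmul, sub_eq_zero]
  simp only [← mul_assoc]
  rw [mul_assoc (a * e * x) e e, he.eq, mul_assoc a e e, he.eq]

theorem mul_eq_zero_of_mem_span_mul_mul {e₀ e₁ x : A} (h : ∀ a, e₁ * a * e₀ = 0)
    (hx : x ∈ Submodule.span k {x : A | ∃ a b, x = a * e₀ * b}) : e₁ * x = 0 := by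
  have hle : Submodule.span k {x : A | ∃ a b, x = a * e₀ * b}
      ≤ LinearMap.ker (LinearMap.mulLeft k e₁) := by
    refine Submodule.span_le.mpr ?_
    rintro _ ⟨a, b, rfl⟩
    simp [← mul_assoc, h]
  exact hle hx

end Corners

theorem finrank_quotient_eq_one_of_span_insert_eq_top {K V : Type*} [Field K] [AddCommGroup V]
    [Module K V] {p : Submodule K V} {v : V} {s : Set V}
    (hspan : Submodule.span K (insert v s) = ⊤)
    (hs : s ⊆ p) (hv : v ∉ p) : Module.finrank K (V ⧸ p) = 1 := by
  have hmk : p.mkQ '' s ⊆ {0} := by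
    rintro _ ⟨x, hx, rfl⟩
    exact (Submodule.Quotient.mk_eq_zero p).mpr (hs hx)
  have htop : K ∙ p.mkQ v = ⊤ := by
    rw [← Submodule.range_mkQ, LinearMap.range_eq_map, ← hspan, Submodule.map_span,
      Set.image_insert_eq, Submodule.span_insert, Submodule.span_eq_bot.mpr hmk, sup_bot_eq]
  have hv0 : p.mkQ v ≠ 0 := by rwa [ne_eq, Submodule.mkQ_apply, Submodule.Quotient.mk_eq_zero]
  rw [← finrank_top, ← htop, finrank_span_singleton hv0]

theorem upper_triangular_counterexample_general
    (k : Type*) [Field k] (A : Type*) [Ring A] [Algebra k A]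
    (e0 e1 u : A)
    (hi0 : e0 * e0 = e0) (hi1 : e1 * e1 = e1) (h01 : e0 * e1 = 0) (h10 : e1 * e0 = 0)
    (hsum : e0 + e1 = 1)
    (hu : u ≠ 0) (hu0 : e0 * u = u) (hu1 : u * e1 = u) (hu0' : u * e0 = 0)
    (hspan : Submodule.span k ({e0, e1, u} : Set A) = ⊤)
    (e : Fin 2 → A) (he : e = ![e0, e1]) (deg : Fin 2 → ℕ)
    (S : Subalgebra k A) (hS : S = Algebra.adjoin k {e0, e1}) :
    (¬ IsReedy k e deg S S) ∧
    (Submodule.span k {x : A | ∃ a ∈ S, ∃ b ∈ S, x = a * b} ≠ (⊤ : Submodule k A)) ∧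
    (LinearMap.range (mulTensor k
        (Submodule.span k {x : A | ∃ a, x = a * e0})
        (Submodule.span k {x : A | ∃ b, x = e0 * b}))
      = Submodule.span k {x : A | ∃ a b, x = a * e0 * b}) ∧
    (LinearMap.ker (mulTensor k
        (Submodule.span k {x : A | ∃ a, x = a * e0})
        (Submodule.span k {x : A | ∃ b, x = e0 * b}))
      = Submodule.span k {z : ↥(Submodule.span k {x : A | ∃ a, x = a * e0})
            ⊗[k] ↥(Submodule.span k {x : A | ∃ b, x = e0 * b}) |
          ∃ a x b : A,
            z = (⟨a * e0 * x * e0, Submodule.subset_span ⟨a * e0 * x, rfl⟩⟩ :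
                  Submodule.span k {x : A | ∃ a, x = a * e0})
                ⊗ₜ[k] (⟨e0 * b, Submodule.subset_span ⟨b, rfl⟩⟩ :
                  Submodule.span k {x : A | ∃ b, x = e0 * b})
              - (⟨a * e0, Submodule.subset_span ⟨a, rfl⟩⟩ :
                  Submodule.span k {x : A | ∃ a, x = a * e0})
                ⊗ₜ[k] (⟨e0 * (x * (e0 * b)), Submodule.subset_span ⟨x * (e0 * b), rfl⟩⟩ :
                  Submodule.span k {x : A | ∃ b, x = e0 * b})}) ∧
    (Module.finrank k (cornerSpace k e0 e0 Set.univ) = 1) ∧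
    (Module.finrank k (A ⧸ Submodule.span k {x : A | ∃ a b, x = a * e0 * b}) = 1) := by
  subst he
  have he0 : e0 ≠ 0 := fun h => hu (by rw [← hu0, h, zero_mul])
  have he1 : e1 ≠ 0 := fun h => hu (by rw [← hu0', ← add_zero e0, ← h, hsum, mul_one])
  have hu_corner : e0 * u * e1 = u := by rw [hu0, hu1]
  have hu_notMem : u ∉ S := fun h =>
    hu (hu_corner ▸ mul_mul_eq_zero_of_mem_adjoin h01 h10 (hS ▸ h))
  have hAe0 : ∀ a : A, a * e0 ∈ k ∙ e0 := mul_mem_span_singleton_of_span_eq_top hspan <| by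
    rintro x (rfl | rfl | rfl) <;> simp [hi0, h10, hu0']
  have hker := ker_mulTensor_eq_bot (k := k) hi0 hAe0
  refine ⟨fun hR => ?_, fun htop => ?_, range_mulTensor_eq_span hi0,
    le_antisymm (hker ▸ bot_le) (span_balanced_le_ker_mulTensor hi0),
    finrank_cornerSpace_eq_one hi0 he0 hAe0, ?_⟩
  · have hbot : cornerSpace k e0 e1 Set.univ = ⊥ :=
      hR.cornerSpace_univ_eq_bot (j := 0) (i := 1)
        fun l => by fin_cases l <;> simp [hS, cornerSpace_adjoin_eq_bot h01 h10]
    have hu_mem : u ∈ cornerSpace k e0 e1 Set.univ :=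
      Submodule.subset_span ⟨u, trivial, hu_corner.symm⟩
    exact hu ((Submodule.mem_bot k).mp (hbot ▸ hu_mem))
  · have hle : Submodule.span k {x : A | ∃ a ∈ S, ∃ b ∈ S, x = a * b}
        ≤ Subalgebra.toSubmodule S :=
      Submodule.span_le.mpr fun _ ⟨a, ha, b, hb, hab⟩ => hab ▸ Subalgebra.mul_mem _ ha hb
    exact hu_notMem (hle (htop ▸ Submodule.mem_top))
  · have he1A : ∀ a, e1 * a * e0 = 0 := fun a => by
      obtain ⟨α, hα⟩ := Submodule.mem_span_singleton.mp (hAe0 a)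
      rw [mul_assoc, ← hα, mul_smul_comm, h10, smul_zero]
    refine finrank_quotient_eq_one_of_span_insert_eq_top (v := e1) (s := {e0, u}) ?_ ?_ ?_
    · rwa [Set.insert_comm]
    · exact Set.insert_subset_iff.mpr ⟨Submodule.subset_span ⟨1, 1, by simp⟩,
        Set.singleton_subset_iff.mpr (Submodule.subset_span ⟨1, u, by simp [hu0]⟩)⟩
    · exact fun h => he1 (hi1 ▸ mul_eq_zero_of_mem_span_mul_mul he1A h)

/-- Let `A = k[• → •]` be the algebra of upper triangular `2 × 2`
matrices over `k`, presented by its basis `e₀ = E₁₁`, `e₁ = E₂₂`, `u = E₁₂`, with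
`deg e₀ = 0`, `deg e₁ = 1`, and let `S = A⁺ = A⁻` be the diagonal subalgebra `k e₀ × k e₁`.
Then `(A, S, S)` is not Reedy (the multiplication map `A⁺ ⊗_S A⁻ → A` is not surjective),
yet the multiplication map `Ae₀ ⊗_{e₀Ae₀} e₀A → Ae₀A` is bijective (it has image `Ae₀A`
and kernel spanned by the balanced relations over `e₀Ae₀`), and both `e₀Ae₀ ≅ k` and
`A/Ae₀A ≅ k` are one-dimensional, hence Reedy algebras. -/
theorem upper_triangular_counterexample
    (k : Type*) [Field k] (A : Type*) [Ring A] [Algebra k A] [FiniteDimensional k A]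
    (e0 e1 u : A)
    (hi0 : e0 * e0 = e0) (hi1 : e1 * e1 = e1) (h01 : e0 * e1 = 0) (h10 : e1 * e0 = 0)
    (hsum : e0 + e1 = 1)
    (hu : u ≠ 0) (hu0 : e0 * u = u) (hu1 : u * e1 = u) (hu0' : u * e0 = 0)
    (hu1' : e1 * u = 0) (huu : u * u = 0)
    (hspan : Submodule.span k ({e0, e1, u} : Set A) = ⊤) (hdim : Module.finrank k A = 3)
    (e : Fin 2 → A) (he : e = ![e0, e1]) (deg : Fin 2 → ℕ) (hdeg : deg = ![0, 1])
    (S : Subalgebra k A) (hS : S = Algebra.adjoin k {e0, e1}) :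
    (¬ IsReedy k e deg S S) ∧
    (Submodule.span k {x : A | ∃ a ∈ S, ∃ b ∈ S, x = a * b} ≠ (⊤ : Submodule k A)) ∧
    (LinearMap.range (mulTensor k
        (Submodule.span k {x : A | ∃ a, x = a * e0})
        (Submodule.span k {x : A | ∃ b, x = e0 * b}))
      = Submodule.span k {x : A | ∃ a b, x = a * e0 * b}) ∧
    (LinearMap.ker (mulTensor k
        (Submodule.span k {x : A | ∃ a, x = a * e0})
        (Submodule.span k {x : A | ∃ b, x = e0 * b}))
      = Submodule.span k {z : ↥(Submodule.span k {x : A | ∃ a, x = a * e0})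
            ⊗[k] ↥(Submodule.span k {x : A | ∃ b, x = e0 * b}) |
          ∃ a x b : A,
            z = (⟨a * e0 * x * e0, Submodule.subset_span ⟨a * e0 * x, rfl⟩⟩ :
                  Submodule.span k {x : A | ∃ a, x = a * e0})
                ⊗ₜ[k] (⟨e0 * b, Submodule.subset_span ⟨b, rfl⟩⟩ :
                  Submodule.span k {x : A | ∃ b, x = e0 * b})
              - (⟨a * e0, Submodule.subset_span ⟨a, rfl⟩⟩ :
                  Submodule.span k {x : A | ∃ a, x = a * e0})
                ⊗ₜ[k] (⟨e0 * (x * (e0 * b)), Submodule.subset_span ⟨x * (e0 * b), rfl⟩⟩ :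
                  Submodule.span k {x : A | ∃ b, x = e0 * b})}) ∧
    (Module.finrank k (cornerSpace k e0 e0 Set.univ) = 1) ∧
    (Module.finrank k (A ⧸ Submodule.span k {x : A | ∃ a b, x = a * e0 * b}) = 1) :=
  upper_triangular_counterexample_general k A e0 e1 u hi0 hi1 h01 h10 hsum hu hu0 hu1 hu0' hspan e
    he deg S hS
end

section
/- Let C be a finite-dimensional elementary k-algebra with maximal semisimple subalgebra S. Then the restriction to S of the canonical surjection C → C/rad(C) is an isomorphism, i.e., C = S ⊕ rad(C) as k-vector spaces. -/
open scoped TensorProduct DirectSum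

/-- A finite-dimensional `k`-algebra is elementary if its quotient by the Jacobson radical
is isomorphic to a finite product of copies of `k`. -/
def IsElementary (k : Type*) [Field k] (C : Type*) [Ring C] [Algebra k C] : Prop :=
  ∃ (m : ℕ) (φ : C →ₐ[k] (Fin m → k)), Function.Surjective φ ∧
    ∀ x, φ x = 0 ↔ x ∈ Ideal.jacobson (⊥ : Ideal C)


/-!
An elementary algebra `C` maps onto `kᵐ` by some `φ` whose kernel `J = rad C` is nil. A
semisimple subalgebra `S` meets `J` trivially, since `S ∩ J` is a nil left ideal of `S`; so `φ`
embeds `S` into `kᵐ` and it remains to see that `φ(S) = kᵐ`. Otherwise some coordinates `i ≠ j`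
are not separated by `φ(S)`. The indicator of the coordinates that `φ(S)` does not separate from
`i` lifts to an idempotent `g ∈ S`, and the basis idempotent `eᵢ` lifts to an idempotent `f` of
`gCg` commuting with `S`, on which `S` then acts through the character `s ↦ φ(s)ᵢ`. Hence
`S + k f` is a subalgebra, still meeting `J` trivially because `φ f = eᵢ ∉ φ(S)`. It embeds
into the reduced ring `kᵐ`, so it is semisimple, contradicting the maximality of `S`.
-/

theorem IsArtinianRing.isNilpotent_of_mem_jacobson_bot {R : Type*} [Ring R] [IsArtinianRing R]
    {x : R} (hx : x ∈ Ideal.jacobson (⊥ : Ideal R)) : IsNilpotent x := by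
  obtain ⟨n, hn⟩ := IsArtinianRing.isNilpotent_jacobson_bot (R := R)
  exact ⟨n, by simpa [hn] using Ideal.pow_mem_pow hx n⟩

theorem Ideal.mem_jacobson_bot_of_forall_isNilpotent_mul {R : Type*} [Ring R] {x : R}
    (h : ∀ y, IsNilpotent (y * x)) : x ∈ Ideal.jacobson (⊥ : Ideal R) := by
  refine Ideal.mem_jacobson_iff.2 fun y => ?_
  obtain ⟨u, hu⟩ := (h y).isUnit_add_one
  refine ⟨↑u⁻¹, ?_⟩
  rw [Ideal.mem_bot, mul_assoc, ← mul_add_one (↑u⁻¹ : R), ← hu, Units.inv_mul, sub_self]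

theorem AlgHom.exists_isIdempotentElem_mem_eq {k A B : Type*} [CommRing k] [Ring A] [Ring B]
    [Algebra k A] [Algebra k B] (φ : A →ₐ[k] B) (hnil : ∀ x, φ x = 0 → IsNilpotent x)
    (Z : Subalgebra k A) {a : A} (ha : a ∈ Z) (he : IsIdempotentElem (φ a)) :
    ∃ e ∈ Z, IsIdempotentElem e ∧ φ e = φ a := by
  have hker (x) (hx : x ∈ RingHom.ker (φ.comp Z.val).toRingHom) : IsNilpotent x :=
    (IsNilpotent.map_iff (f := Z.val) Subtype.val_injective).1 (hnil _ hx)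
  obtain ⟨e, he, hφe⟩ :=
    exists_isIdempotentElem_eq_of_ker_isNilpotent _ hker (φ a) ⟨⟨a, ha⟩, rfl⟩ he
  exact ⟨e, e.2, congrArg Subtype.val he, hφe⟩

theorem Submodule.disjoint_sup_span_ker {K M N : Type*} [DivisionRing K] [AddCommGroup M]
    [Module K M] [AddCommGroup N] [Module K N] (ψ : M →ₗ[K] N) {p : Submodule K M}
    (hp : Disjoint p (LinearMap.ker ψ)) {x : M} (hx : ψ x ∉ p.map ψ) :
    Disjoint (p ⊔ K ∙ x) (LinearMap.ker ψ) := by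
  refine disjoint_def.2 fun y hy hψy => ?_
  obtain ⟨s, hs, z, hz, rfl⟩ := mem_sup.1 hy
  obtain ⟨c, rfl⟩ := mem_span_singleton.1 hz
  rw [LinearMap.mem_ker, map_add, map_smul] at hψy
  obtain rfl : c = 0 := by
    by_contra hc
    refine hx ⟨-c⁻¹ • s, p.smul_mem _ hs, ?_⟩
    rw [map_smul, eq_neg_of_add_eq_zero_left hψy, smul_neg, neg_smul, neg_neg, inv_smul_smul₀ hc]
  rw [zero_smul, add_zero] at hψy ⊢
  exact disjoint_def.1 hp s hs hψy

namespace Subalgebra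

section Ring

variable {k A : Type*} [CommRing k] [Ring A] [Algebra k A]

theorem disjoint_jacobson_of_isSemisimpleRing [IsArtinianRing A] (S : Subalgebra k A)
    [IsSemisimpleRing S] :
    Disjoint (toSubmodule S) ((Ideal.jacobson (⊥ : Ideal A)).restrictScalars k) := by
  refine Submodule.disjoint_def.2 fun x hxS hxJ => ?_
  have hnil (y : S) : IsNilpotent (y * ⟨x, hxS⟩) :=
    (IsNilpotent.map_iff (f := S.val) Subtype.val_injective).1
      (IsArtinianRing.isNilpotent_of_mem_jacobson_bot (Ideal.mul_mem_left _ (y : A) hxJ))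
  have := Ideal.mem_jacobson_bot_of_forall_isNilpotent_mul hnil
  rw [Ideal.jacobson_bot, IsSemisimpleRing.jacobson_eq_bot, Ideal.mem_bot] at this
  exact congrArg Subtype.val this

open Submodule in
theorem exists_toSubmodule_eq_sup_span (S : Subalgebra k A) {f : A} (hf : IsIdempotentElem f)
    (hSf : ∀ s ∈ S, s * f ∈ k ∙ f ∧ f * s ∈ k ∙ f) :
    ∃ T : Subalgebra k A, toSubmodule T = toSubmodule S ⊔ k ∙ f := by
  set p := toSubmodule S ⊔ k ∙ f
  have hSF : toSubmodule S * (k ∙ f) ≤ k ∙ f := mul_le.2 fun s hs x hx => by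
    obtain ⟨c, rfl⟩ := mem_span_singleton.1 hx
    rw [mul_smul_comm]
    exact Submodule.smul_mem _ c (hSf s hs).1
  have hFS : (k ∙ f) * toSubmodule S ≤ k ∙ f := mul_le.2 fun x hx s hs => by
    obtain ⟨c, rfl⟩ := mem_span_singleton.1 hx
    rw [smul_mul_assoc]
    exact Submodule.smul_mem _ c (hSf s hs).2
  have hFF : (k ∙ f) * (k ∙ f) = k ∙ f := by
    rw [span_mul_span, Set.singleton_mul_singleton, hf.eq]
  have hmul : p * p ≤ p := by
    rw [Submodule.sup_mul, Submodule.mul_sup, Submodule.mul_sup,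
      S.isIdempotentElem_toSubmodule.eq, hFF]
    exact sup_le (sup_le le_sup_left (hSF.trans le_sup_right))
      (sup_le (hFS.trans le_sup_right) le_sup_right)
  exact ⟨p.toSubalgebra (mem_sup_left S.one_mem) fun x y hx hy => hmul (mul_mem_mul hx hy), rfl⟩

end Ring

section Field

variable {k : Type*} [Field k]

theorem isSemisimpleRing_of_disjoint_ker {A B : Type*} [Ring A] [Algebra k A]
    [FiniteDimensional k A] [Ring B] [Algebra k B] [IsReduced B] (φ : A →ₐ[k] B)
    (T : Subalgebra k A) (hT : Disjoint (toSubmodule T) (LinearMap.ker φ.toLinearMap)) :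
    IsSemisimpleRing T := by
  have := IsArtinianRing.of_finite k T
  refine IsArtinianRing.isSemisimpleRing_iff_jacobson.2 (eq_bot_iff.2 fun x hx => ?_)
  rw [← Ideal.jacobson_bot] at hx
  have hφx : φ x = 0 :=
    ((IsArtinianRing.isNilpotent_of_mem_jacobson_bot hx).map (φ.comp T.val)).eq_zero
  exact Subtype.ext (Submodule.disjoint_def.1 hT _ x.2 hφx)

variable {ι : Type*}

theorem mul_indicator_setOf_forall_apply_eq {V : Subalgebra k (ι → k)} {v : ι → k} (hv : v ∈ V)
    (i : ι) :
    v * {l | ∀ w ∈ V, w l = w i}.indicator 1 = v i • {l | ∀ w ∈ V, w l = w i}.indicator 1 := by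
  ext l
  by_cases hl : ∀ w ∈ V, w l = w i
  · simp [Set.indicator_of_mem (show l ∈ {l | ∀ w ∈ V, w l = w i} from hl), hl v hv]
  · simp [Set.indicator_of_notMem (show l ∉ {l | ∀ w ∈ V, w l = w i} from hl)]

variable [Fintype ι]

theorem indicator_setOf_forall_apply_eq_mem (V : Subalgebra k (ι → k)) (i : ι) :
    {l | ∀ v ∈ V, v l = v i}.indicator 1 ∈ V := by
  classical
  have hw (j : ι) : ∃ w ∈ V, w i = 1 ∧ (¬ (∀ v ∈ V, v j = v i) → w j = 0) := by
    by_cases hj : ∀ v ∈ V, v j = v i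
    · exact ⟨1, V.one_mem, rfl, fun h => absurd hj h⟩
    push Not at hj
    obtain ⟨v, hv, hvj⟩ := hj
    refine ⟨(v i - v j)⁻¹ • (v - algebraMap k _ (v j)),
      V.smul_mem (V.sub_mem hv (V.algebraMap_mem _)) _, ?_, fun _ => ?_⟩
    · simp [inv_mul_cancel₀ (sub_ne_zero.2 (Ne.symm hvj))]
    · simp
  choose w hwV hwi hwj using hw
  have hprod : ∏ j, w j ∈ V := V.prod_mem fun j _ => hwV j
  convert hprod using 1
  ext l
  by_cases hl : ∀ v ∈ V, v l = v i
  · rw [Set.indicator_of_mem (show l ∈ {l | ∀ v ∈ V, v l = v i} from hl), Pi.one_apply,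
      hl _ hprod, Finset.prod_apply]
    exact (Finset.prod_eq_one fun j _ => hwi j).symm
  · rw [Set.indicator_of_notMem (show l ∉ {l | ∀ v ∈ V, v l = v i} from hl), Finset.prod_apply]
    exact (Finset.prod_eq_zero (f := fun j => w j l) (Finset.mem_univ l) (hwj l hl)).symm

theorem eq_top_of_pi_separates (V : Subalgebra k (ι → k))
    (h : ∀ i j, i ≠ j → ∃ v ∈ V, v j ≠ v i) : V = ⊤ := by
  classical
  have hsingle (i : ι) : {l | ∀ v ∈ V, v l = v i} = {i} := by
    ext l
    refine ⟨fun hl => ?_, fun hl => by simp [Set.mem_singleton_iff.1 hl]⟩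
    by_contra hli
    obtain ⟨v, hv, hvl⟩ := h i l (Ne.symm hli)
    exact hvl (hl v hv)
  refine eq_top_iff.2 fun x _ => ?_
  rw [← Finset.univ_sum_single x]
  refine V.sum_mem fun i _ => ?_
  have := V.smul_mem (indicator_setOf_forall_apply_eq_mem V i) (x i)
  rwa [hsingle, Set.indicator_singleton, ← Pi.single_smul', smul_eq_mul, Pi.one_apply,
    mul_one] at this

end Field

end Subalgebra

section PiQuotient

variable {k C ι : Type*} [Field k] [Ring C] [Algebra k C] [Fintype ι]
  (φ : C →ₐ[k] (ι → k)) {S : Subalgebra k C}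

theorem exists_isIdempotentElem_mem_mul_eq_smul
    (hS : Disjoint (Subalgebra.toSubmodule S) (LinearMap.ker φ.toLinearMap)) (i : ι) :
    ∃ g ∈ S, IsIdempotentElem g ∧ φ g i = 1 ∧ ∀ s ∈ S, s * g = φ s i • g ∧ g * s = φ s i • g := by
  have hinj {x y : C} (hx : x ∈ S) (hy : y ∈ S) (h : φ x = φ y) : x = y :=
    sub_eq_zero.1 <| Submodule.disjoint_def.1 hS _ (S.sub_mem hx hy) (by simp [h])
  set u := {l | ∀ v ∈ S.map φ, v l = v i}.indicator (1 : ι → k)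
  obtain ⟨g, hg, hgu⟩ : ∃ g ∈ S, φ g = u :=
    Subalgebra.mem_map.1 ((S.map φ).indicator_setOf_forall_apply_eq_mem i)
  have hmul (s : C) (hs : s ∈ S) : φ s * u = φ s i • u :=
    Subalgebra.mul_indicator_setOf_forall_apply_eq (Subalgebra.mem_map.2 ⟨s, hs, rfl⟩) i
  have hgi : φ g i = 1 := by simp [hgu, u]
  refine ⟨g, hg, hinj (S.mul_mem hg hg) hg ?_, hgi, fun s hs => ⟨?_, ?_⟩⟩
  · simpa [hgi, hgu] using hmul g hg
  · exact hinj (S.mul_mem hs hg) (S.smul_mem hg _) (by rw [map_mul, map_smul, hgu, hmul s hs])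
  · exact hinj (S.mul_mem hg hs) (S.smul_mem hg _)
      (by rw [map_mul, map_smul, hgu, mul_comm, hmul s hs])

theorem exists_isIdempotentElem_eq_single_mul_eq_smul [DecidableEq ι]
    (hφ : Function.Surjective φ) (hnil : ∀ x, φ x = 0 → IsNilpotent x)
    (hS : Disjoint (Subalgebra.toSubmodule S) (LinearMap.ker φ.toLinearMap)) (i : ι) :
    ∃ f, IsIdempotentElem f ∧ φ f = Pi.single i 1 ∧
      ∀ s ∈ S, s * f = φ s i • f ∧ f * s = φ s i • f := by
  obtain ⟨g, hg, hg2, hgi, hgS⟩ := exists_isIdempotentElem_mem_mul_eq_smul φ hS i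
  obtain ⟨c, hc⟩ := hφ (Pi.single i 1)
  have hφg : φ g * Pi.single i 1 = Pi.single i 1 := by
    ext l; by_cases hl : l = i <;> simp [hl, hgi]
  -- Cutting `c` down to `gCg` makes `S` act on it by scalars, so it commutes with `S`.
  have hcen : g * c * g ∈ Subalgebra.centralizer k S := fun s hs =>
    calc s * (g * c * g) = s * g * c * g := by noncomm_ring
      _ = φ s i • (g * c * g) := by rw [(hgS s hs).1, smul_mul_assoc, smul_mul_assoc]
      _ = g * c * (g * s) := by rw [(hgS s hs).2, mul_smul_comm]
      _ = g * c * g * s := (mul_assoc ..).symm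
  have hφa : φ (g * c * g) = Pi.single i 1 := by
    rw [map_mul, map_mul, hc, hφg, mul_comm, hφg]
  obtain ⟨e, he, he2, hφe⟩ := φ.exists_isIdempotentElem_mem_eq hnil _ hcen
    (by rw [hφa, IsIdempotentElem]; ext l; by_cases hl : l = i <;> simp [hl])
  have hge : Commute g e := (Subalgebra.mem_centralizer_iff k).1 he g hg
  refine ⟨g * e, IsIdempotentElem.mul_of_commute hge hg2 he2, by rw [map_mul, hφe, hφa, hφg],
    fun s hs => ⟨?_, ?_⟩⟩
  · rw [← mul_assoc, (hgS s hs).1, smul_mul_assoc]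
  · rw [mul_assoc, ← (Subalgebra.mem_centralizer_iff k).1 he s hs, ← mul_assoc, (hgS s hs).2,
      smul_mul_assoc]

theorem exists_gt_disjoint_ker_of_map_ne_top [DecidableEq ι]
    (hφ : Function.Surjective φ) (hnil : ∀ x, φ x = 0 → IsNilpotent x)
    (hS : Disjoint (Subalgebra.toSubmodule S) (LinearMap.ker φ.toLinearMap))
    (hne : S.map φ ≠ ⊤) :
    ∃ T, S < T ∧ Disjoint (Subalgebra.toSubmodule T) (LinearMap.ker φ.toLinearMap) := by
  obtain ⟨i, j, hij, hj⟩ : ∃ i j, i ≠ j ∧ ∀ v ∈ S.map φ, v j = v i := by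
    by_contra! h
    exact hne ((S.map φ).eq_top_of_pi_separates h)
  obtain ⟨f, hf, hφf, hSf⟩ := exists_isIdempotentElem_eq_single_mul_eq_smul φ hφ hnil hS i
  have hfS : φ f ∉ (Subalgebra.toSubmodule S).map φ.toLinearMap := fun h => by
    rw [← Subalgebra.map_toSubmodule] at h
    simpa [hφf, hij.symm] using hj _ h
  obtain ⟨T, hT⟩ := S.exists_toSubmodule_eq_sup_span hf fun s hs =>
    ⟨(hSf s hs).1 ▸ Submodule.smul_mem _ _ (Submodule.mem_span_singleton_self f),
      (hSf s hs).2 ▸ Submodule.smul_mem _ _ (Submodule.mem_span_singleton_self f)⟩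
  have hST : S ≤ T := fun x hx => by
    rw [← Subalgebra.mem_toSubmodule, hT]; exact Submodule.mem_sup_left hx
  have hfT : f ∈ T := by
    rw [← Subalgebra.mem_toSubmodule, hT]
    exact Submodule.mem_sup_right (Submodule.mem_span_singleton_self f)
  refine ⟨T, SetLike.lt_iff_le_and_exists.2 ⟨hST, f, hfT, fun hfS' => hfS ⟨f, hfS', rfl⟩⟩, ?_⟩
  rw [hT]
  exact Submodule.disjoint_sup_span_ker _ hS hfS

end PiQuotient

/-- Let `C` be a finite-dimensional elementary `k`-algebra and `S` a
maximal semisimple subalgebra of `C`. Then the restriction to `S` of the canonical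
surjection `C → C/rad(C)` is an isomorphism; equivalently, `C = S ⊕ rad(C)` as
`k`-vector spaces. -/
theorem elementary_wedderburn_splitting
    (k : Type*) [Field k] (C : Type*) [Ring C] [Algebra k C] [FiniteDimensional k C]
    (helem : IsElementary k C)
    (S : Subalgebra k C) (hSsemi : IsSemisimpleRing ↥S)
    (hSmax : ∀ T : Subalgebra k C, S ≤ T → IsSemisimpleRing ↥T → T = S) :
    IsCompl (Subalgebra.toSubmodule S)
      (Submodule.restrictScalars k (Ideal.jacobson (⊥ : Ideal C))) := by
  obtain ⟨m, φ, hφ, hker⟩ := helem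
  have := IsArtinianRing.of_finite k C
  have hJ : (Ideal.jacobson (⊥ : Ideal C)).restrictScalars k = LinearMap.ker φ.toLinearMap := by
    ext x; exact (hker x).symm
  have hnil (x : C) (hx : φ x = 0) : IsNilpotent x :=
    IsArtinianRing.isNilpotent_of_mem_jacobson_bot ((hker x).1 hx)
  have hdisj := S.disjoint_jacobson_of_isSemisimpleRing
  rw [hJ] at hdisj ⊢
  have hmap : S.map φ = ⊤ := by
    by_contra hne
    obtain ⟨T, hST, hT⟩ := exists_gt_disjoint_ker_of_map_ne_top φ hφ hnil hdisj hne
    exact hST.ne' (hSmax T hST.le (T.isSemisimpleRing_of_disjoint_ker φ hT))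
  refine ⟨hdisj, Submodule.map_eq_range_iff.1 ?_⟩
  rw [← Subalgebra.map_toSubmodule, hmap, LinearMap.range_eq_top.2 hφ, Algebra.top_toSubmodule]
end
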